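/- arXiv:1306.6744 — 4 statements merged into one kernel-verified Lean document; each statement's English description precedes it below -/
import Mathlib

section
/- For a uniformly random permutation w of {1,...,2n}, the labeled Dyck path pair (p_A(w), ℓ(w)) and the labeled Dyck path pair (p_B(w), m(w)) arising from the crossout correspondence are independent random variables. -/
open Finset

/-- `D ⊆ {1,…,L}` is the set of down steps of a Dyck path of length `L`:
it has `L/2` elements and every prefix has at least as many up steps as down steps. -/
def IsDyck (L : ℕ) (D : Finset ℕ) : Prop :=
  D ⊆ Finset.Icc 1 L ∧ 2 * D.card = L ∧ ∀ k ≤ L, 2 * (D.filter (· ≤ k)).card ≤ k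

instance (L : ℕ) : DecidablePred (IsDyck L) := fun D => by
  unfold IsDyck; infer_instance

/-- The collection of all Dyck paths (encoded by their down-step sets) of length `L`. -/
def dyckPaths (L : ℕ) : Finset (Finset ℕ) :=
  (Finset.Icc 1 L).powerset.filter (IsDyck L)

/-- The position (in `{1,…,L}`) of the `i`-th down step (`1`-indexed). -/
def dstep (D : Finset ℕ) (i : ℕ) : ℕ := (D.sort (· ≤ ·)).getD (i - 1) 0

/-- The height `h_i` of the `i`-th down step of a Dyck path:  the step goes from
`(d_i - 1, h_i)` to `(d_i, h_i - 1)`; equivalently `h_i = d_i + 1 - 2 i`. -/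
def ht (D : Finset ℕ) (i : ℕ) : ℕ := dstep D i + 1 - 2 * i

/-- The modified height `h_i^*`: equal to `h_i - 1` if there is no up step to the right of
the `i`-th down step, and to `h_i` otherwise. -/
def hstar (L : ℕ) (D : Finset ℕ) (i : ℕ) : ℕ :=
  if Finset.Ioc (dstep D i) L ⊆ D then ht D i - 1 else ht D i

/-- `crossout w k` is the pair (positions marked A, positions marked B) after `k` rounds of
the crossout procedure: in each round, first mark B at the unmarked position with the smallest
value `w i`, then mark A at the leftmost unmarked position. -/
def crossout {N : ℕ} (w : Equiv.Perm (Fin N)) : ℕ → Finset (Fin N) × Finset (Fin N)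
  | 0 => (∅, ∅)
  | k + 1 =>
    let p := crossout w k
    let u := (Finset.univ : Finset (Fin N)) \ (p.1 ∪ p.2)
    if hu : u.Nonempty then
      let b := w.symm ((u.image w).min' (hu.image _))
      if ha : (u.erase b).Nonempty then
        (insert ((u.erase b).min' ha) p.1, insert b p.2)
      else (p.1, insert b p.2)
    else p

/-- The set of positions marked A under the crossout procedure. -/
def markA {N : ℕ} (w : Equiv.Perm (Fin N)) : Finset (Fin N) := (crossout w N).1

/-- The set of positions marked B under the crossout procedure. -/
def markB {N : ℕ} (w : Equiv.Perm (Fin N)) : Finset (Fin N) := (crossout w N).2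

/-- Down-step set of Alice's path `p_A(w)`:  the values (in `{1,…,N}`) at positions marked A. -/
def pAset {N : ℕ} (w : Equiv.Perm (Fin N)) : Finset ℕ :=
  (markA w).image (fun a => Fin.val (w a) + 1)

/-- Down-step set of Bob's path `p_B(w)`:  `{b + 1 : b marked B} ∪ {N + 2}`
(positions taken in `{1,…,N}`, so `b + 1` becomes `(b : ℕ) + 2`). -/
def pBset {N : ℕ} (w : Equiv.Perm (Fin N)) : Finset ℕ :=
  insert (N + 2) ((markB w).image (fun b => Fin.val b + 2))

/-- Number of AA inversions of `w`. -/
def aaInv {N : ℕ} (w : Equiv.Perm (Fin N)) : ℕ :=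
  (Finset.univ.filter (fun p : Fin N × Fin N =>
    p.1 < p.2 ∧ w p.2 < w p.1 ∧ p.1 ∈ markA w ∧ p.2 ∈ markA w)).card

/-- Number of BB inversions of `w`. -/
def bbInv {N : ℕ} (w : Equiv.Perm (Fin N)) : ℕ :=
  (Finset.univ.filter (fun p : Fin N × Fin N =>
    p.1 < p.2 ∧ w p.2 < w p.1 ∧ p.1 ∈ markB w ∧ p.2 ∈ markB w)).card

/-- Number of AB inversions of `w`. -/
def abInv {N : ℕ} (w : Equiv.Perm (Fin N)) : ℕ :=
  (Finset.univ.filter (fun p : Fin N × Fin N =>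
    p.1 < p.2 ∧ w p.2 < w p.1 ∧ p.1 ∈ markA w ∧ p.2 ∈ markB w)).card

/-- Total number of inversions of `w`. -/
def invW {N : ℕ} (w : Equiv.Perm (Fin N)) : ℕ :=
  (Finset.univ.filter (fun p : Fin N × Fin N => p.1 < p.2 ∧ w p.2 < w p.1)).card

/-- The statistic `z(w) = #{i < j : w i < w j and i is marked B}`. -/
def zstat {N : ℕ} (w : Equiv.Perm (Fin N)) : ℕ :=
  (Finset.univ.filter (fun p : Fin N × Fin N =>
    p.1 < p.2 ∧ w p.1 < w p.2 ∧ p.1 ∈ markB w)).card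

/-- Label carried by the down step of `p_A` corresponding to the A-position `a`:
one plus the number of A-positions to the left of `a` with larger value. -/
def labelA {N : ℕ} (w : Equiv.Perm (Fin N)) (a : Fin N) : ℕ :=
  1 + ((markA w).filter (fun a' => a' < a ∧ w a < w a')).card

/-- The label sequence `ℓ` of `p_A(w)`: `ellSeq w r` is the label on the `r`-th down step. -/
def ellSeq {N : ℕ} (w : Equiv.Perm (Fin N)) (r : ℕ) : ℕ :=
  ∑ a ∈ (markA w).filter (fun a => Fin.val (w a) + 1 = dstep (pAset w) r), labelA w a

/-- Label carried by the down step of `p_B` corresponding to the B-position `b`: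
one plus the number of B-positions to the right of `b` with smaller value. -/
def labelB {N : ℕ} (w : Equiv.Perm (Fin N)) (b : Fin N) : ℕ :=
  1 + ((markB w).filter (fun b' => w b' < w b ∧ b < b')).card

/-- The label sequence `m` of `p_B(w)`: `emSeq w r` is the label on the `r`-th down step. -/
def emSeq {N : ℕ} (w : Equiv.Perm (Fin N)) (r : ℕ) : ℕ :=
  ∑ b ∈ (markB w).filter (fun b => Fin.val b + 2 = dstep (pBset w) r), labelB w b

/-- The `q`-integer `[k]_q = 1 + q + ⋯ + q^{k-1}` in `ℤ[q]`. -/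
noncomputable def qint (k : ℕ) : Polynomial ℤ := ∑ j ∈ Finset.range k, Polynomial.X ^ j

/-- The `q`-integer `[k]` in the variable `X v` of the two-variable polynomial ring. -/
noncomputable def qint2 (v : Fin 2) (k : ℕ) : MvPolynomial (Fin 2) ℤ :=
  ∑ j ∈ Finset.range k, (MvPolynomial.X v) ^ j

/-- `M` is a perfect matching of `{1,…,2n}`: a family of pairwise disjoint 2-element sets
whose union is `{1,…,2n}`. -/
def IsMatching (n : ℕ) (M : Finset (Finset ℕ)) : Prop :=
  (∀ e ∈ M, e.card = 2) ∧ (M : Set (Finset ℕ)).PairwiseDisjoint id ∧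
    M.biUnion id = Finset.Icc 1 (2 * n)

/-!
The labeled path `(p_A, ℓ)` of `w` records the values at the A-positions together with their
inversion table with respect to the order of positions; `(p_B, m)` records the B-positions
together with the inversion table of the values there. The crossout split `(A, B)` is
characterized by rank conditions (`IsCrossoutSplit`): the `k`-th smallest B-value lies below the
values at the A-positions from the `k`-th on, and the `k`-th A-position lies to the left of the
B-positions carrying the later B-values. Since an inversion table determines an arrangement,
the two labeled paths together determine `w`. Conversely, given `w₁` and `w₂`, put the A-values
of `w₁` on the A-positions of `w₂` in the order used by `w₁`, and the B-values of `w₁` on the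
B-positions of `w₂` in the relative order used by `w₂`. The value conditions of the
characterization are inherited from `w₁` and the position conditions from `w₂`, so the new
permutation has the crossout split of `w₂`, the labeled path `(p_A, ℓ)` of `w₁` and the labeled
path `(p_B, m)` of `w₂`. Hence `w ↦ ((p_A, ℓ), (p_B, m))` is a bijection onto a product of two
sets, which is the independence.
-/

section Rank
variable {α β : Type*} [LinearOrder β]

def rankBy (f : α → β) (s : Finset α) (x : α) : ℕ := #{y ∈ s | f y < f x}

variable {f : α → β} {s : Finset α} {x y : α}

lemma rankBy_lt_rankBy_iff (hx : x ∈ s) : rankBy f s x < rankBy f s y ↔ f x < f y := by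
  constructor
  · intro h
    by_contra hle
    refine h.not_ge (card_le_card fun z hz => ?_)
    simp only [mem_filter] at hz ⊢
    exact ⟨hz.1, hz.2.trans_le (not_lt.mp hle)⟩
  · intro h
    refine card_lt_card ⟨fun z hz => ?_, fun hsub => ?_⟩
    · simp only [mem_filter] at hz ⊢
      exact ⟨hz.1, hz.2.trans h⟩
    · exact lt_irrefl _ (mem_filter.mp (hsub (mem_filter.mpr ⟨hx, h⟩))).2

lemma rankBy_injOn (hf : Set.InjOn f s) : Set.InjOn (rankBy f s) s := by
  intro x hx y hy h
  refine hf hx hy (le_antisymm (not_lt.mp fun hlt => ?_) (not_lt.mp fun hlt => ?_))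
  · exact ((rankBy_lt_rankBy_iff hy).mpr hlt).ne' h
  · exact ((rankBy_lt_rankBy_iff hx).mpr hlt).ne h

lemma rankBy_lt_card (hx : x ∈ s) : rankBy f s x < #s :=
  card_lt_card (filter_ssubset.mpr ⟨x, hx, lt_irrefl _⟩)

lemma exists_rankBy_eq (hf : Set.InjOn f s) {k : ℕ} (hk : k < #s) :
    ∃ x ∈ s, rankBy f s x = k := by
  have himage : s.image (rankBy f s) = range #s :=
    eq_of_subset_of_card_le (fun r hr => by
      obtain ⟨x, hx, rfl⟩ := mem_image.mp hr
      exact mem_range.mpr (rankBy_lt_card hx))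
      (by rw [card_range, card_image_of_injOn (rankBy_injOn hf)])
  have hk' : k ∈ s.image (rankBy f s) := himage ▸ mem_range.mpr hk
  simpa using hk'

lemma insert_filter_rankBy_lt [DecidableEq α] (hf : Set.InjOn f s) (hx : x ∈ s) {k : ℕ}
    (hk : rankBy f s x = k) :
    insert x {y ∈ s | rankBy f s y < k} = {y ∈ s | rankBy f s y < k + 1} := by
  ext y
  simp only [mem_insert, mem_filter]
  constructor
  · rintro (rfl | ⟨hy, h⟩)
    · exact ⟨hx, by omega⟩
    · exact ⟨hy, by omega⟩
  · rintro ⟨hy, h⟩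
    rcases Nat.lt_succ_iff_lt_or_eq.mp h with h | h
    · exact Or.inr ⟨hy, h⟩
    · exact Or.inl (rankBy_injOn hf hy hx (h.trans hk.symm))

lemma rankBy_eq_of_forall_lt {k : ℕ} (hcard : #{y ∈ s | rankBy f s y < k} = k)
    (hk : k ≤ rankBy f s x) (hlt : ∀ y ∈ s, f y < f x → rankBy f s y < k) :
    rankBy f s x = k :=
  le_antisymm (hcard ▸ card_le_card fun y hy => by
    simp only [mem_filter] at hy ⊢
    exact ⟨hy.1, hlt y hy.1 hy.2⟩) hk

open Classical in
noncomputable def rankMatch (f : α → β) (s : Finset α) (g : α → β) (t : Finset α) (x : α) :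
    α :=
  if h : ∃ y ∈ t, rankBy g t y = rankBy f s x then h.choose else x

variable {g : α → β} {t : Finset α}

lemma rankMatch_spec (hg : Set.InjOn g t) (hst : #s = #t) (hx : x ∈ s) :
    rankMatch f s g t x ∈ t ∧ rankBy g t (rankMatch f s g t x) = rankBy f s x := by
  have h : ∃ y ∈ t, rankBy g t y = rankBy f s x :=
    exists_rankBy_eq hg (hst ▸ rankBy_lt_card hx)
  rw [rankMatch, dif_pos h]
  exact h.choose_spec

lemma rankMatch_lt_rankMatch_iff (hg : Set.InjOn g t) (hst : #s = #t) (hx : x ∈ s)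
    (hy : y ∈ s) : g (rankMatch f s g t x) < g (rankMatch f s g t y) ↔ f x < f y := by
  obtain ⟨hxt, hxr⟩ := rankMatch_spec (f := f) hg hst hx
  obtain ⟨-, hyr⟩ := rankMatch_spec (f := f) hg hst hy
  rw [← rankBy_lt_rankBy_iff hxt, hxr, hyr, rankBy_lt_rankBy_iff hx]

lemma rankMatch_injOn (hf : Set.InjOn f s) (hg : Set.InjOn g t) (hst : #s = #t) :
    Set.InjOn (rankMatch f s g t) s := fun x hx y hy h =>
  rankBy_injOn hf hx hy (by
    rw [← (rankMatch_spec hg hst hx).2, ← (rankMatch_spec hg hst hy).2, h])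

lemma image_rankMatch [DecidableEq α] (hf : Set.InjOn f s) (hg : Set.InjOn g t)
    (hst : #s = #t) : s.image (rankMatch f s g t) = t :=
  eq_of_subset_of_card_le
    (fun y hy => by
      obtain ⟨x, hx, rfl⟩ := mem_image.mp hy
      exact (rankMatch_spec hg hst hx).1)
    (by rw [card_image_of_injOn (rankMatch_injOn hf hg hst), hst])

end Rank

theorem eqOn_of_card_inversions_eq {α β : Type*} [LinearOrder α] [LinearOrder β]
    {f g : α → β} (s : Finset α) (hf : Set.InjOn f s) (hg : Set.InjOn g s)
    (himage : s.image f = s.image g)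
    (hinv : ∀ x ∈ s, #{z ∈ s | f z < f x ∧ x < z} = #{z ∈ s | g z < g x ∧ x < z}) :
    Set.EqOn f g s := by
  classical
  induction s using Finset.induction_on_min with
  | empty => simp
  | insert a s ha ih =>
    have haf : f a ∉ s.image f := fun h => by
      obtain ⟨x, hx, hfx⟩ := mem_image.mp h
      exact (ha x hx).ne (hf (by simp) (by simp [hx]) hfx.symm)
    have hag : g a ∉ s.image g := fun h => by
      obtain ⟨x, hx, hgx⟩ := mem_image.mp h
      exact (ha x hx).ne (hg (by simp) (by simp [hx]) hgx.symm)
    -- the inversions at the leftmost point `a` count the values below `f a`, i.e. its rank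
    have hrank : ∀ h : α → β, Set.InjOn h ↑(insert a s) →
        #{z ∈ insert a s | h z < h a ∧ a < z} = rankBy id ((insert a s).image h) (h a) := by
      intro h hh
      rw [rankBy, filter_image, card_image_of_injOn (hh.mono (coe_subset.mpr (filter_subset _ _)))]
      congr 1
      refine filter_congr fun z hz => ?_
      rcases mem_insert.mp hz with rfl | hz
      · simp
      · simp [ha z hz]
    have hfa : f a = g a := by
      refine rankBy_injOn (f := id) (Set.injOn_id _) (mem_image_of_mem f (mem_insert_self a s))
        (himage ▸ mem_image_of_mem g (mem_insert_self a s)) ?_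
      rw [← hrank f hf, hinv a (mem_insert_self a s), hrank g hg, himage]
    have hs : Set.EqOn f g s := by
      refine ih (hf.mono (coe_subset.mpr (subset_insert a s)))
        (hg.mono (coe_subset.mpr (subset_insert a s))) ?_
        fun x hx => ?_
      · rw [← erase_insert haf, ← erase_insert hag, ← image_insert, ← image_insert, himage, hfa]
      · have hsub : ∀ h : α → β, {z ∈ insert a s | h z < h x ∧ x < z} =
            {z ∈ s | h z < h x ∧ x < z} := fun h => by
          rw [filter_insert, if_neg fun hax => (ha x hx).not_gt hax.2]
        rw [← hsub f, ← hsub g]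
        exact hinv x (mem_insert_of_mem hx)
    intro x hx
    rcases mem_insert.mp hx with rfl | hx
    · exact hfa
    · exact hs hx

theorem card_filter_and_mul_card_eq {S X Y : Type*} [Fintype S] (f : S → X) (g : S → Y)
    (hinj : ∀ u v, f u = f v → g u = g v → u = v) (hmix : ∀ u v, ∃ s, f s = f u ∧ g s = g v)
    (P : X → Prop) (Q : Y → Prop) [DecidablePred P] [DecidablePred Q] :
    #{s | P (f s) ∧ Q (g s)} * Fintype.card S = #{s | P (f s)} * #{s | Q (g s)} := by
  choose μ hμf hμg using hmix
  -- `(u, v) ↦ (μ u v, μ v u)` is an involution of `S × S` exchanging the two products below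
  rw [← card_univ, ← card_product, ← card_product]
  refine card_nbij' (fun p => (μ p.1 p.2, μ p.2 p.1)) (fun p => (μ p.1 p.2, μ p.2 p.1))
    ?_ ?_ ?_ ?_
  · intro p hp
    simp only [mem_coe, mem_product, mem_filter, mem_univ, true_and, and_true] at hp ⊢
    rw [hμf, hμg]
    exact ⟨hp.1, hp.2⟩
  · intro p hp
    simp only [mem_coe, mem_product, mem_filter, mem_univ, true_and, and_true] at hp ⊢
    rw [hμf, hμg]
    exact ⟨hp.1, hp.2⟩
  all_goals
    intro p _
    ext
    · exact hinj _ _ (by rw [hμf, hμf]) (by rw [hμg, hμg])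
    · exact hinj _ _ (by rw [hμf, hμf]) (by rw [hμg, hμg])

section Crossout
variable {N : ℕ} (w : Equiv.Perm (Fin N))

def unmarked (k : ℕ) : Finset (Fin N) := ((crossout w k).1 ∪ (crossout w k).2)ᶜ

lemma mem_unmarked {k : ℕ} {x : Fin N} :
    x ∈ unmarked w k ↔ x ∉ (crossout w k).1 ∧ x ∉ (crossout w k).2 := by
  simp [unmarked]

lemma crossout_succ (k : ℕ) :
    crossout w (k + 1) =
      if hu : (unmarked w k).Nonempty then
        let b := w.symm (((unmarked w k).image w).min' (hu.image _))
        if ha : ((unmarked w k).erase b).Nonempty then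
          (insert (((unmarked w k).erase b).min' ha) (crossout w k).1, insert b (crossout w k).2)
        else ((crossout w k).1, insert b (crossout w k).2)
      else crossout w k :=
  rfl

structure IsRound (k : ℕ) (a b : Fin N) : Prop where
  a_mem : a ∈ unmarked w k
  b_mem : b ∈ unmarked w k
  ne : a ≠ b
  b_min : ∀ x ∈ unmarked w k, w b ≤ w x
  a_min : ∀ x ∈ unmarked w k, x ≠ b → a ≤ x

variable {w}

lemma exists_isRound {k : ℕ} (hk : 2 ≤ #(unmarked w k)) : ∃ a b, IsRound w k a b ∧
    crossout w (k + 1) = (insert a (crossout w k).1, insert b (crossout w k).2) := by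
  have hu : (unmarked w k).Nonempty := card_pos.mp (by omega)
  set b := w.symm (((unmarked w k).image w).min' (hu.image _)) with hb_def
  have hb : b ∈ unmarked w k := by
    obtain ⟨i, hi, hwi⟩ := mem_image.mp (min'_mem _ (hu.image w))
    rwa [hb_def, ← hwi, Equiv.symm_apply_apply]
  have hbmin : ∀ x ∈ unmarked w k, w b ≤ w x := fun x hx => by
    rw [hb_def, Equiv.apply_symm_apply]
    exact min'_le _ _ (mem_image_of_mem w hx)
  have ha : ((unmarked w k).erase b).Nonempty :=
    card_pos.mp (by rw [card_erase_of_mem hb]; omega)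
  have haU := min'_mem _ ha
  refine ⟨_, b, ⟨mem_of_mem_erase haU, hb, ne_of_mem_erase haU, hbmin,
    fun x hx hxb => min'_le _ _ (mem_erase.mpr ⟨hxb, hx⟩)⟩, ?_⟩
  rw [crossout_succ, dif_pos hu]
  exact dif_pos ha

lemma IsRound.unique {k : ℕ} {a b a' b' : Fin N} (h : IsRound w k a b) (h' : IsRound w k a' b') :
    a = a' ∧ b = b' := by
  obtain rfl : b = b' := w.injective (le_antisymm (h.b_min _ h'.b_mem) (h'.b_min _ h.b_mem))
  exact ⟨le_antisymm (h.a_min _ h'.a_mem h'.ne) (h'.a_min _ h.a_mem h.ne), rfl⟩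

lemma IsRound.crossout_succ {k : ℕ} {a b : Fin N} (h : IsRound w k a b) :
    crossout w (k + 1) = (insert a (crossout w k).1, insert b (crossout w k).2) := by
  have hpair : {a, b} ⊆ unmarked w k := insert_subset h.a_mem (singleton_subset_iff.mpr h.b_mem)
  obtain ⟨a', b', h', hstep⟩ := exists_isRound (card_pair h.ne ▸ card_le_card hpair)
  obtain ⟨rfl, rfl⟩ := h.unique h'
  exact hstep

variable (w) in
lemma crossout_monotone : Monotone (crossout w) := by
  refine monotone_nat_of_le_succ fun k => ?_
  rewrite [crossout_succ]
  dsimp only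
  split_ifs
  · exact ⟨subset_insert _ _, subset_insert _ _⟩
  · exact ⟨subset_rfl, subset_insert _ _⟩
  · exact le_rfl

lemma crossout_eq_of_unmarked_eq_empty {k j : ℕ} (h : unmarked w k = ∅) (hkj : k ≤ j) :
    crossout w j = crossout w k := by
  induction j, hkj using Nat.le_induction with
  | base => rfl
  | succ j _ ih =>
    have hj : unmarked w j = ∅ := by rw [unmarked, ih]; exact h
    rw [crossout_succ, dif_neg (by rw [hj]; exact not_nonempty_empty), ih]

lemma mem_unmarked_of_eq_filter {A B : Finset (Fin N)} {rA rB : Fin N → ℕ} {k : ℕ}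
    (hk : crossout w k = ({x ∈ A | rA x < k}, {x ∈ B | rB x < k})) {x : Fin N} :
    x ∈ unmarked w k ↔ (x ∈ A → k ≤ rA x) ∧ (x ∈ B → k ≤ rB x) := by
  simp [mem_unmarked, hk]

end Crossout

section Partition
variable {n : ℕ} (w : Equiv.Perm (Fin (2 * n)))

lemma crossout_card {k : ℕ} (hk : k ≤ n) : Disjoint (crossout w k).1 (crossout w k).2 ∧
    #(crossout w k).1 = k ∧ #(crossout w k).2 = k := by
  induction k with
  | zero => simp [crossout]
  | succ k ih =>
    obtain ⟨hdisj, h1, h2⟩ := ih (by omega)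
    have hcard : #(unmarked w k) = 2 * n - 2 * k := by
      rw [unmarked, card_compl, card_union_of_disjoint hdisj, h1, h2, Fintype.card_fin]; ring_nf
    obtain ⟨a, b, hr, hstep⟩ := exists_isRound (w := w) (k := k) (by omega)
    obtain ⟨ha1, ha2⟩ := (mem_unmarked w).mp hr.a_mem
    obtain ⟨hb1, hb2⟩ := (mem_unmarked w).mp hr.b_mem
    rw [hstep]
    refine ⟨?_, by rw [card_insert_of_notMem ha1, h1], by rw [card_insert_of_notMem hb2, h2]⟩
    simp only [disjoint_insert_left, disjoint_insert_right, mem_insert, not_or]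
    exact ⟨⟨hr.ne.symm, hb1⟩, ha2, hdisj⟩

lemma unmarked_card {k : ℕ} (hk : k ≤ n) : #(unmarked w k) = 2 * (n - k) := by
  obtain ⟨hdisj, h1, h2⟩ := crossout_card w hk
  rw [unmarked, card_compl, card_union_of_disjoint hdisj, h1, h2, Fintype.card_fin]
  omega

lemma crossout_eq_of_le {k : ℕ} (hk : n ≤ k) : crossout w k = crossout w n :=
  crossout_eq_of_unmarked_eq_empty (card_eq_zero.mp (by rw [unmarked_card w le_rfl]; simp)) hk

lemma markA_eq_crossout : markA w = (crossout w n).1 := by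
  rw [markA, crossout_eq_of_le w (by omega)]

lemma markB_eq_crossout : markB w = (crossout w n).2 := by
  rw [markB, crossout_eq_of_le w (by omega)]

lemma disjoint_markA_markB : Disjoint (markA w) (markB w) := by
  rw [markA_eq_crossout, markB_eq_crossout]
  exact (crossout_card w le_rfl).1

lemma card_markA : #(markA w) = n := by
  rw [markA_eq_crossout]
  exact (crossout_card w le_rfl).2.1

lemma card_markB : #(markB w) = n := by
  rw [markB_eq_crossout]
  exact (crossout_card w le_rfl).2.2

lemma markA_union_markB : markA w ∪ markB w = univ :=
  eq_univ_of_card _ (by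
    rw [card_union_of_disjoint (disjoint_markA_markB w), card_markA, card_markB,
      Fintype.card_fin]
    ring)

lemma markA_eq_compl : markA w = (markB w)ᶜ :=
  eq_compl_iff_isCompl.mpr ⟨disjoint_markA_markB w, codisjoint_iff.mpr (markA_union_markB w)⟩

end Partition

/-- `rankBy id A` numbers the A-positions from left to right and `rankBy w B` numbers the
B-positions by increasing value; the crossout marks the `k`-th of each in round `k + 1`. -/
structure IsCrossoutSplit {N : ℕ} (w : Equiv.Perm (Fin N)) (A B : Finset (Fin N)) : Prop where
  disjoint : Disjoint A B
  union_eq : A ∪ B = univ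
  card_eq : #A = #B
  value_lt : ∀ x ∈ A, ∀ y ∈ B, rankBy w B y ≤ rankBy id A x → w y < w x
  pos_lt : ∀ x ∈ A, ∀ y ∈ B, rankBy id A x < rankBy w B y → x < y

namespace IsCrossoutSplit
variable {N : ℕ} {w : Equiv.Perm (Fin N)} {A B : Finset (Fin N)}

lemma crossout_eq (h : IsCrossoutSplit w A B) {k : ℕ} (hk : k ≤ #A) :
    crossout w k = ({x ∈ A | rankBy id A x < k}, {y ∈ B | rankBy w B y < k}) := by
  induction k with
  | zero => simp [crossout]
  | succ k ih =>
    have hF := ih (by omega)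
    obtain ⟨a, haA, ha⟩ := exists_rankBy_eq (f := id) (Set.injOn_id _) (by omega : k < #A)
    obtain ⟨b, hbB, hb⟩ := exists_rankBy_eq w.injective.injOn
      (by rw [← h.card_eq]; omega : k < #B)
    have hmem := fun x => mem_unmarked_of_eq_filter (x := x) hF
    have hnotB : ∀ x ∈ A, x ∉ B := fun x hx => disjoint_left.mp h.disjoint hx
    have hAB : ∀ x, x ∈ A ∨ x ∈ B := fun x => mem_union.mp (h.union_eq ▸ mem_univ x)
    have hround : IsRound w k a b := by
      refine ⟨(hmem a).mpr ⟨fun _ => ha.ge, fun haB => absurd haB (hnotB a haA)⟩,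
        (hmem b).mpr ⟨fun hbA => absurd hbB (hnotB b hbA), fun _ => hb.ge⟩,
        fun hab => hnotB a haA (hab ▸ hbB), fun x hx => ?_, fun x hx hxb => ?_⟩
      · obtain ⟨hxA, hxB⟩ := (hmem x).mp hx
        rcases hAB x with hx' | hx'
        · exact (h.value_lt x hx' b hbB (hb.trans_le (hxA hx'))).le
        · exact not_lt.mp fun hlt => (hxB hx').not_gt (hb ▸ (rankBy_lt_rankBy_iff hx').mpr hlt)
      · obtain ⟨hxA, hxB⟩ := (hmem x).mp hx
        rcases hAB x with hx' | hx'
        · exact not_lt.mp fun hlt => (hxA hx').not_gt (ha ▸ (rankBy_lt_rankBy_iff hx').mpr hlt)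
        · have hkx : k < rankBy w B x := lt_of_le_of_ne (hxB hx') fun hkx =>
            hxb (rankBy_injOn w.injective.injOn hx' hbB (hkx.symm.trans hb.symm))
          exact (h.pos_lt a haA x hx' (ha.trans_lt hkx)).le
    rw [hround.crossout_succ, hF, insert_filter_rankBy_lt (Set.injOn_id _) haA ha,
      insert_filter_rankBy_lt w.injective.injOn hbB hb]

lemma markA_markB_eq (h : IsCrossoutSplit w A B) : markA w = A ∧ markB w = B := by
  have hN : #A + #B = N := by
    rw [← card_union_of_disjoint h.disjoint, h.union_eq, card_univ, Fintype.card_fin]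
  have hfull : crossout w #A = (A, B) := by
    rw [h.crossout_eq le_rfl]
    congr 1
    · exact filter_true_of_mem fun x hx => rankBy_lt_card hx
    · exact filter_true_of_mem fun x hx => h.card_eq ▸ rankBy_lt_card hx
  have hempty : unmarked w #A = ∅ := by
    rw [unmarked, hfull]
    simp [h.union_eq]
  rw [markA, markB, crossout_eq_of_unmarked_eq_empty hempty (by omega), hfull]
  exact ⟨rfl, rfl⟩

end IsCrossoutSplit

section Ranks
variable {n : ℕ} (w : Equiv.Perm (Fin (2 * n)))

lemma exists_isRound_rankBy {k : ℕ} (hk : k < n)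
    (hF : crossout w k = ({x ∈ markA w | rankBy id (markA w) x < k},
      {y ∈ markB w | rankBy w (markB w) y < k})) :
    ∃ a b, IsRound w k a b ∧
      crossout w (k + 1) = (insert a (crossout w k).1, insert b (crossout w k).2) ∧
      a ∈ markA w ∧ b ∈ markB w ∧ rankBy id (markA w) a = k ∧ rankBy w (markB w) b = k := by
  obtain ⟨a, b, hr, hstep⟩ := exists_isRound (w := w) (k := k)
    (by rw [unmarked_card w hk.le]; omega)
  have hmarked := crossout_monotone w (by omega : k + 1 ≤ 2 * n)
  have haA : a ∈ markA w := hmarked.1 (by rw [hstep]; exact mem_insert_self _ _)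
  have hbB : b ∈ markB w := hmarked.2 (by rw [hstep]; exact mem_insert_self _ _)
  have hnotB : ∀ x ∈ markA w, x ∉ markB w := fun x hx =>
    disjoint_left.mp (disjoint_markA_markB w) hx
  have hmem := fun x => mem_unmarked_of_eq_filter (x := x) hF
  obtain ⟨-, h1, h2⟩ := crossout_card w hk.le
  rw [hF] at h1 h2
  -- the A-positions left of `a` and the B-positions of smaller value than `b` are all among
  -- the `k` already marked ones
  refine ⟨a, b, hr, hstep, haA, hbB, rankBy_eq_of_forall_lt h1 (((hmem a).mp hr.a_mem).1 haA)
    fun y hy hya => ?_, rankBy_eq_of_forall_lt h2 (((hmem b).mp hr.b_mem).2 hbB)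
    fun y hy hyb => ?_⟩
  · by_contra hyk
    have hyU := (hmem y).mpr ⟨fun _ => not_lt.mp hyk, fun hyB => absurd hyB (hnotB y hy)⟩
    exact (hr.a_min y hyU fun hyb => hnotB y hy (hyb ▸ hbB)).not_gt hya
  · by_contra hyk
    have hyU := (hmem y).mpr ⟨fun hyA => absurd hy (hnotB y hyA), fun _ => not_lt.mp hyk⟩
    exact (hr.b_min y hyU).not_gt hyb

lemma crossout_eq_filter_rankBy {k : ℕ} (hk : k ≤ n) :
    crossout w k = ({x ∈ markA w | rankBy id (markA w) x < k},
      {y ∈ markB w | rankBy w (markB w) y < k}) := by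
  induction k with
  | zero => simp [crossout]
  | succ k ih =>
    obtain ⟨a, b, -, hstep, haA, hbB, ha, hb⟩ := exists_isRound_rankBy w (by omega) (ih (by omega))
    rw [hstep, ih (by omega), insert_filter_rankBy_lt (Set.injOn_id _) haA ha,
      insert_filter_rankBy_lt w.injective.injOn hbB hb]

theorem isCrossoutSplit_markA_markB : IsCrossoutSplit w (markA w) (markB w) := by
  have hnotB : ∀ x ∈ markA w, x ∉ markB w := fun x hx =>
    disjoint_left.mp (disjoint_markA_markB w) hx
  refine ⟨disjoint_markA_markB w, markA_union_markB w, by rw [card_markA, card_markB],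
    fun x hx y hy hyx => ?_, fun x hx y hy hxy => ?_⟩
  · have hk : rankBy w (markB w) y < n := (rankBy_lt_card hy).trans_eq (card_markB w)
    have hF := crossout_eq_filter_rankBy w hk.le
    obtain ⟨a, b, hr, -, -, hbB, -, hb⟩ := exists_isRound_rankBy w hk hF
    obtain rfl : b = y := rankBy_injOn w.injective.injOn hbB hy hb
    have hxU := (mem_unmarked_of_eq_filter hF).mpr
      ⟨fun _ => hyx, fun hxB => absurd hxB (hnotB x hx)⟩
    exact lt_of_le_of_ne (hr.b_min x hxU) (w.injective.ne fun hbx => hnotB x hx (hbx ▸ hbB))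
  · have hk : rankBy id (markA w) x < n := (rankBy_lt_card hx).trans_eq (card_markA w)
    have hF := crossout_eq_filter_rankBy w hk.le
    obtain ⟨a, b, hr, -, haA, -, ha, hb⟩ := exists_isRound_rankBy w hk hF
    obtain rfl : a = x := rankBy_injOn (Set.injOn_id _) haA hx ha
    have hyU := (mem_unmarked_of_eq_filter hF).mpr
      ⟨fun hyA => absurd hy (hnotB y hyA), fun _ => hxy.le⟩
    have hyb : y ≠ b := by rintro rfl; omega
    exact lt_of_le_of_ne (hr.a_min y hyU hyb) fun hay => hnotB a haA (hay ▸ hy)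

end Ranks

lemma exists_dstep_eq {D : Finset ℕ} {x : ℕ} (hx : x ∈ D) : ∃ r, dstep D r = x := by
  obtain ⟨i, hi, hget⟩ := List.getElem_of_mem ((mem_sort (· ≤ ·)).mpr hx)
  exact ⟨i + 1, by rw [dstep, Nat.add_sub_cancel, List.getD_eq_getElem _ _ hi, hget]⟩

section Labels
variable {N : ℕ} (w : Equiv.Perm (Fin N))

def aValues : Finset (Fin N) := (markA w).image w

lemma pAset_eq_image_aValues : pAset w = (aValues w).image (fun v => v.val + 1) := by
  rw [pAset, aValues, image_image]
  rfl

lemma image_symm_aValues : (aValues w).image w.symm = markA w := by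
  simp [aValues, image_image]

lemma ellSeq_eq_sum_aValues (r : ℕ) :
    ellSeq w r = ∑ v ∈ aValues w with v.val + 1 = dstep (pAset w) r, labelA w (w.symm v) := by
  rw [ellSeq, aValues, filter_image, sum_image w.injective.injOn]
  simp only [Equiv.symm_apply_apply]

lemma ellSeq_eq_labelA {r : ℕ} {v : Fin N} (hv : v ∈ aValues w)
    (hr : v.val + 1 = dstep (pAset w) r) : ellSeq w r = labelA w (w.symm v) := by
  rw [ellSeq_eq_sum_aValues, sum_eq_single_of_mem v (mem_filter.mpr ⟨hv, hr⟩)]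
  intro u hu hne
  exact absurd (Fin.ext (by have := (mem_filter.mp hu).2; omega)) hne

lemma labelA_symm_eq (v : Fin N) :
    labelA w (w.symm v) = 1 + #{u ∈ aValues w | w.symm u < w.symm v ∧ v < u} := by
  rw [labelA, aValues, filter_image, card_image_of_injective _ w.injective]
  simp only [Equiv.symm_apply_apply, Equiv.apply_symm_apply]

lemma emSeq_eq_labelB {r : ℕ} {b : Fin N} (hb : b ∈ markB w)
    (hr : b.val + 2 = dstep (pBset w) r) : emSeq w r = labelB w b := by
  rw [emSeq, sum_eq_single_of_mem b (mem_filter.mpr ⟨hb, hr⟩)]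
  intro c hc hne
  exact absurd (Fin.ext (by have := (mem_filter.mp hc).2; omega)) hne

variable {w} {w' : Equiv.Perm (Fin N)}

theorem pAset_ellSeq_eq_iff : (pAset w, ellSeq w) = (pAset w', ellSeq w') ↔
    aValues w = aValues w' ∧ ∀ v ∈ aValues w, labelA w (w.symm v) = labelA w' (w'.symm v) := by
  rw [Prod.mk.injEq]
  constructor
  · rintro ⟨hA, hl⟩
    have hV : aValues w = aValues w' :=
      image_injective (f := fun v : Fin N => v.val + 1) (fun u v h => Fin.ext (by simpa using h))
        (by rw [← pAset_eq_image_aValues, ← pAset_eq_image_aValues, hA])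
    refine ⟨hV, fun v hv => ?_⟩
    obtain ⟨r, hr⟩ := exists_dstep_eq
      (show v.val + 1 ∈ pAset w from pAset_eq_image_aValues w ▸ mem_image_of_mem _ hv)
    rw [← ellSeq_eq_labelA w hv hr.symm, congrFun hl r,
      ellSeq_eq_labelA w' (hV ▸ hv) (by rw [← hA, hr])]
  · rintro ⟨hV, hl⟩
    have hA : pAset w = pAset w' := by rw [pAset_eq_image_aValues, pAset_eq_image_aValues, hV]
    refine ⟨hA, funext fun r => ?_⟩
    rw [ellSeq_eq_sum_aValues, ellSeq_eq_sum_aValues, hA, hV]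
    exact sum_congr rfl fun v hv => hl v (hV ▸ (mem_filter.mp hv).1)

lemma markB_eq_of_pBset_eq (h : pBset w = pBset w') : markB w = markB w' := by
  have hnot : ∀ u : Equiv.Perm (Fin N), N + 2 ∉ (markB u).image (fun b => b.val + 2) := by
    intro u hu
    obtain ⟨b, -, hb⟩ := mem_image.mp hu
    omega
  rw [pBset, pBset] at h
  exact image_injective (f := fun b : Fin N => b.val + 2) (fun b c h => Fin.ext (by simpa using h))
    (by rw [← erase_insert (hnot w), h, erase_insert (hnot w')])

theorem pBset_emSeq_eq_iff : (pBset w, emSeq w) = (pBset w', emSeq w') ↔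
    markB w = markB w' ∧ ∀ b ∈ markB w, labelB w b = labelB w' b := by
  rw [Prod.mk.injEq]
  constructor
  · rintro ⟨hB, hm⟩
    have hM := markB_eq_of_pBset_eq hB
    refine ⟨hM, fun b hb => ?_⟩
    obtain ⟨r, hr⟩ := exists_dstep_eq
      (show b.val + 2 ∈ pBset w from mem_insert_of_mem (mem_image_of_mem _ hb))
    rw [← emSeq_eq_labelB w hb hr.symm, congrFun hm r,
      emSeq_eq_labelB w' (hM ▸ hb) (by rw [← hB, hr])]
  · rintro ⟨hM, hl⟩
    have hB : pBset w = pBset w' := by rw [pBset, pBset, hM]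
    refine ⟨hB, funext fun r => ?_⟩
    rw [emSeq, emSeq, hB, hM]
    exact sum_congr rfl fun b hb => hl b (hM ▸ (mem_filter.mp hb).1)

end Labels

section Injective
variable {n : ℕ}

lemma image_markB_eq_compl (w : Equiv.Perm (Fin (2 * n))) :
    (markB w).image w = (aValues w)ᶜ := by
  ext v
  simp only [aValues, mem_compl, mem_image, markA_eq_compl w, not_exists, not_and]
  constructor
  · rintro ⟨b, hb, rfl⟩ a ha hab
    exact ha (w.injective hab ▸ hb)
  · intro h
    exact ⟨w.symm v, by_contra fun hv => h _ hv (w.apply_symm_apply v), w.apply_symm_apply v⟩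

theorem eq_of_labeledPaths_eq {w w' : Equiv.Perm (Fin (2 * n))}
    (hA : (pAset w, ellSeq w) = (pAset w', ellSeq w'))
    (hB : (pBset w, emSeq w) = (pBset w', emSeq w')) : w = w' := by
  obtain ⟨hV, hlA⟩ := pAset_ellSeq_eq_iff.mp hA
  obtain ⟨hM, hlB⟩ := pBset_emSeq_eq_iff.mp hB
  have hMA : markA w = markA w' := by rw [markA_eq_compl, markA_eq_compl, hM]
  have heqB : Set.EqOn w w' (markB w) :=
    eqOn_of_card_inversions_eq _ w.injective.injOn w'.injective.injOn
      (by rw [image_markB_eq_compl, hM, image_markB_eq_compl, hV]) fun b hb => by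
        have := hlB b hb
        rw [labelB, labelB, ← hM] at this
        omega
  have heqA : Set.EqOn w.symm w'.symm (aValues w) :=
    eqOn_of_card_inversions_eq _ w.symm.injective.injOn w'.symm.injective.injOn
      (by rw [image_symm_aValues, hV, image_symm_aValues, hMA]) fun v hv => by
        have := hlA v hv
        rw [labelA_symm_eq, labelA_symm_eq, ← hV] at this
        omega
  ext x
  by_cases hx : x ∈ markA w
  · have hx' := heqA (mem_image_of_mem w hx)
    rw [Equiv.symm_apply_apply] at hx'
    rw [w'.symm_apply_eq.mp hx'.symm]
  · rw [markA_eq_compl, mem_compl, not_not] at hx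
    rw [heqB hx]

end Injective

section Mix
variable {n : ℕ} (w₁ w₂ : Equiv.Perm (Fin (2 * n)))

noncomputable def mixPos (x : Fin (2 * n)) : Fin (2 * n) :=
  if x ∈ markA w₂ then rankMatch id (markA w₂) id (markA w₁) x
  else rankMatch w₂ (markB w₂) w₁ (markB w₁) x

variable {w₁ w₂}

lemma mixPos_of_mem_markA {x : Fin (2 * n)} (hx : x ∈ markA w₂) :
    mixPos w₁ w₂ x = rankMatch id (markA w₂) id (markA w₁) x :=
  if_pos hx

lemma mixPos_of_mem_markB {y : Fin (2 * n)} (hy : y ∈ markB w₂) :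
    mixPos w₁ w₂ y = rankMatch w₂ (markB w₂) w₁ (markB w₁) y :=
  if_neg fun hyA => disjoint_left.mp (disjoint_markA_markB w₂) hyA hy

lemma card_markA_eq : #(markA w₂) = #(markA w₁) := by rw [card_markA, card_markA]

lemma card_markB_eq : #(markB w₂) = #(markB w₁) := by rw [card_markB, card_markB]

lemma mixPos_spec_markA {x : Fin (2 * n)} (hx : x ∈ markA w₂) :
    mixPos w₁ w₂ x ∈ markA w₁ ∧ rankBy id (markA w₁) (mixPos w₁ w₂ x) = rankBy id (markA w₂) x :=
  mixPos_of_mem_markA hx ▸ rankMatch_spec (Set.injOn_id _) card_markA_eq hx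

lemma mixPos_spec_markB {y : Fin (2 * n)} (hy : y ∈ markB w₂) :
    mixPos w₁ w₂ y ∈ markB w₁ ∧ rankBy w₁ (markB w₁) (mixPos w₁ w₂ y) = rankBy w₂ (markB w₂) y :=
  mixPos_of_mem_markB hy ▸ rankMatch_spec w₁.injective.injOn card_markB_eq hy

lemma mixPos_lt_mixPos_iff {x x' : Fin (2 * n)} (hx : x ∈ markA w₂) (hx' : x' ∈ markA w₂) :
    mixPos w₁ w₂ x < mixPos w₁ w₂ x' ↔ x < x' := by
  rw [mixPos_of_mem_markA hx, mixPos_of_mem_markA hx']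
  exact rankMatch_lt_rankMatch_iff (Set.injOn_id _) card_markA_eq hx hx'

lemma image_mixPos_markA : (markA w₂).image (mixPos w₁ w₂) = markA w₁ := by
  rw [image_congr fun x hx => mixPos_of_mem_markA hx]
  exact image_rankMatch (Set.injOn_id _) (Set.injOn_id _) card_markA_eq

variable (w₁ w₂) in
lemma mixPos_injective : Function.Injective (mixPos w₁ w₂) := by
  have hAB : ∀ x, x ∈ markA w₂ ∨ x ∈ markB w₂ := fun x =>
    mem_union.mp (markA_union_markB w₂ ▸ mem_univ x)
  have hdisj := disjoint_left.mp (disjoint_markA_markB w₁)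
  intro x y h
  rcases hAB x with hx | hx <;> rcases hAB y with hy | hy
  · refine rankMatch_injOn (Set.injOn_id _) (Set.injOn_id _) (card_markA_eq (w₁ := w₁)) hx hy ?_
    rwa [mixPos_of_mem_markA hx, mixPos_of_mem_markA hy] at h
  · exact absurd (h ▸ (mixPos_spec_markA hx).1) (hdisj · (mixPos_spec_markB hy).1)
  · exact absurd (h ▸ (mixPos_spec_markB hx).1) fun h' => hdisj (mixPos_spec_markA hy).1 h'
  · refine rankMatch_injOn w₂.injective.injOn w₁.injective.injOn (card_markB_eq (w₁ := w₁)) hx hy ?_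
    rwa [mixPos_of_mem_markB hx, mixPos_of_mem_markB hy] at h

variable (w₁ w₂) in
noncomputable def mixPerm : Equiv.Perm (Fin (2 * n)) :=
  (Equiv.ofBijective _ (Finite.injective_iff_bijective.mp (mixPos_injective w₁ w₂))).trans w₁

lemma mixPerm_apply (x : Fin (2 * n)) : mixPerm w₁ w₂ x = w₁ (mixPos w₁ w₂ x) := rfl

lemma mixPerm_lt_mixPerm_iff {y y' : Fin (2 * n)} (hy : y ∈ markB w₂) (hy' : y' ∈ markB w₂) :
    mixPerm w₁ w₂ y < mixPerm w₁ w₂ y' ↔ w₂ y < w₂ y' := by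
  rw [mixPerm_apply, mixPerm_apply, mixPos_of_mem_markB hy, mixPos_of_mem_markB hy']
  exact rankMatch_lt_rankMatch_iff w₁.injective.injOn card_markB_eq hy hy'

lemma rankBy_mixPerm_markB {y : Fin (2 * n)} (hy : y ∈ markB w₂) :
    rankBy (mixPerm w₁ w₂) (markB w₂) y = rankBy w₂ (markB w₂) y :=
  congrArg card (filter_congr fun _ hz => mixPerm_lt_mixPerm_iff hz hy)

lemma isCrossoutSplit_mixPerm : IsCrossoutSplit (mixPerm w₁ w₂) (markA w₂) (markB w₂) := by
  obtain ⟨hdisj, hunion, hcard, -, hpos⟩ := isCrossoutSplit_markA_markB w₂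
  refine ⟨hdisj, hunion, hcard, fun x hx y hy h => ?_, fun x hx y hy h => ?_⟩
  · obtain ⟨hxA, hxr⟩ := mixPos_spec_markA (w₁ := w₁) hx
    obtain ⟨hyB, hyr⟩ := mixPos_spec_markB (w₁ := w₁) hy
    rw [rankBy_mixPerm_markB hy, ← hxr, ← hyr] at h
    exact (isCrossoutSplit_markA_markB w₁).value_lt _ hxA _ hyB h
  · rw [rankBy_mixPerm_markB hy] at h
    exact hpos x hx y hy h

lemma markA_mixPerm : markA (mixPerm w₁ w₂) = markA w₂ := isCrossoutSplit_mixPerm.markA_markB_eq.1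

lemma markB_mixPerm : markB (mixPerm w₁ w₂) = markB w₂ := isCrossoutSplit_mixPerm.markA_markB_eq.2

lemma aValues_mixPerm : aValues (mixPerm w₁ w₂) = aValues w₁ := by
  rw [aValues, aValues, markA_mixPerm, ← image_mixPos_markA (w₁ := w₁) (w₂ := w₂), image_image]
  rfl

lemma labelA_mixPerm {x : Fin (2 * n)} (hx : x ∈ markA w₂) :
    labelA (mixPerm w₁ w₂) x = labelA w₁ (mixPos w₁ w₂ x) := by
  rw [labelA, labelA, markA_mixPerm, ← image_mixPos_markA (w₁ := w₁) (w₂ := w₂), filter_image,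
    card_image_of_injOn (mixPos_injective w₁ w₂).injOn]
  congr 2
  exact filter_congr fun z hz => by rw [mixPos_lt_mixPos_iff hz hx, mixPerm_apply, mixPerm_apply]

lemma labelB_mixPerm {y : Fin (2 * n)} (hy : y ∈ markB w₂) :
    labelB (mixPerm w₁ w₂) y = labelB w₂ y := by
  rw [labelB, labelB, markB_mixPerm]
  congr 2
  exact filter_congr fun z hz => by rw [mixPerm_lt_mixPerm_iff hz hy]

variable (w₁ w₂) in
theorem exists_labeledPaths_eq : ∃ w : Equiv.Perm (Fin (2 * n)),
    (pAset w, ellSeq w) = (pAset w₁, ellSeq w₁) ∧ (pBset w, emSeq w) = (pBset w₂, emSeq w₂) := by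
  refine ⟨mixPerm w₁ w₂, pAset_ellSeq_eq_iff.mpr ⟨aValues_mixPerm, fun v hv => ?_⟩,
    pBset_emSeq_eq_iff.mpr ⟨markB_mixPerm, fun b hb => labelB_mixPerm (markB_mixPerm ▸ hb)⟩⟩
  have hx : (mixPerm w₁ w₂).symm v ∈ markA w₂ := by
    rw [← markA_mixPerm (w₁ := w₁), ← image_symm_aValues]
    exact mem_image_of_mem _ hv
  have hv : w₁ (mixPos w₁ w₂ ((mixPerm w₁ w₂).symm v)) = v :=
    (mixPerm_apply _).symm.trans (Equiv.apply_symm_apply _ v)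
  rw [labelA_mixPerm hx, ← w₁.eq_symm_apply.mpr hv]

end Mix

open scoped Classical in
/-- for a uniformly random permutation `w` of `{1,…,2n}`, the labeled pair
`(p_A(w), ℓ(w))` is independent of the labeled pair `(p_B(w), m(w))`:  expressed by
cross-multiplying the defining identity `P(X ∧ Y) = P(X) P(Y)`. -/
theorem stmt11 (n : ℕ) (α β : Finset ℕ) (ℓ₀ m₀ : ℕ → ℕ) :
    (Finset.univ.filter (fun w : Equiv.Perm (Fin (2 * n)) =>
        (pAset w = α ∧ ellSeq w = ℓ₀) ∧ (pBset w = β ∧ emSeq w = m₀))).card *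
      Fintype.card (Equiv.Perm (Fin (2 * n))) =
    (Finset.univ.filter (fun w : Equiv.Perm (Fin (2 * n)) =>
        pAset w = α ∧ ellSeq w = ℓ₀)).card *
    (Finset.univ.filter (fun w : Equiv.Perm (Fin (2 * n)) =>
        pBset w = β ∧ emSeq w = m₀)).card :=
  card_filter_and_mul_card_eq (fun w => (pAset w, ellSeq w)) (fun w => (pBset w, emSeq w))
    (fun _ _ => eq_of_labeledPaths_eq) exists_labeledPaths_eq
    (fun p => p.1 = α ∧ p.2 = ℓ₀) (fun p => p.1 = β ∧ p.2 = m₀)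
end

section
/- The number of Hermite histories of length 2n, i.e., pairs (α, ℓ) where α is a Dyck path of length 2n and ℓ assigns to each down step an integer between 1 and its height, equals 1·3·5···(2n-1). -/
open Finset

/-! Weight a lattice path by the product of the starting heights of its down steps; a Dyck path
carries exactly as many Hermite histories as its weight. Let `T m h` (`weightedCount m h`) be the
total weight of the paths of length `m` from height `0` to height `h` that stay nonnegative.
Removing the last step gives `T (m + 1) h = T m (h - 1) + (h + 1) · T m (h + 1)` (no first term
when `h = 0`), which is solved by `T (h + 2t) h = (h + 2t).choose h · 1 · 3 ⋯ (2t - 1)`: choose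
the `h` unmatched up steps and a perfect matching of the other steps. -/

def dyckPrefixes (m h : ℕ) : Finset (Finset ℕ) :=
  {D ∈ (Icc 1 m).powerset | 2 * #D + h = m ∧ ∀ k ≤ m, 2 * #{x ∈ D | x ≤ k} ≤ k}

/-- The height at which the down step at position `d` of `D` starts (the count
`#{x ∈ D | x ≤ d}` includes the step itself). -/
def downHeight (D : Finset ℕ) (d : ℕ) : ℕ := d + 1 - 2 * #{x ∈ D | x ≤ d}

def heightWeight (D : Finset ℕ) : ℕ := ∏ d ∈ D, downHeight D d

def weightedCount (m h : ℕ) : ℕ := ∑ D ∈ dyckPrefixes m h, heightWeight D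

lemma mem_dyckPrefixes {m h : ℕ} {D : Finset ℕ} :
    D ∈ dyckPrefixes m h ↔
      D ⊆ Icc 1 m ∧ 2 * #D + h = m ∧ ∀ k ≤ m, 2 * #{x ∈ D | x ≤ k} ≤ k := by
  rw [dyckPrefixes, mem_filter, mem_powerset]

lemma mem_dyckPrefixes_zero {m : ℕ} {D : Finset ℕ} : D ∈ dyckPrefixes m 0 ↔ IsDyck m D := by
  rw [mem_dyckPrefixes, IsDyck, add_zero]

lemma dyckPrefixes_eq_empty_of_lt {m h : ℕ} (hmh : m < h) : dyckPrefixes m h = ∅ :=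
  eq_empty_of_forall_notMem fun D hD => by have := (mem_dyckPrefixes.1 hD).2.1; omega

lemma dyckPrefixes_zero_zero : dyckPrefixes 0 0 = {∅} := by
  ext D
  simp only [mem_dyckPrefixes, Icc_eq_empty_of_lt zero_lt_one, subset_empty, mem_singleton]
  constructor
  · exact fun h => h.1
  · rintro rfl
    simp

lemma filter_le_eq_self_of_subset_Icc {D : Finset ℕ} {m k : ℕ} (hD : D ⊆ Icc 1 m)
    (hk : m ≤ k) :
    {x ∈ D | x ≤ k} = D :=
  filter_true_of_mem fun _ hx => (mem_Icc.1 (hD hx)).2.trans hk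

lemma succ_notMem_of_subset_Icc {D : Finset ℕ} {m : ℕ} (hD : D ⊆ Icc 1 m) : m + 1 ∉ D :=
  fun hm => by simpa using mem_Icc.1 (hD hm)

lemma subset_Icc_of_succ_notMem {D : Finset ℕ} {m : ℕ} (hD : D ⊆ Icc 1 (m + 1))
    (hm : m + 1 ∉ D) :
    D ⊆ Icc 1 m := fun x hx => by
  have := mem_Icc.1 (hD hx)
  have : x ≠ m + 1 := ne_of_mem_of_not_mem hx hm
  exact mem_Icc.2 (by omega)

lemma filter_notMem_dyckPrefixes_succ_succ (m h : ℕ) :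
    {D ∈ dyckPrefixes (m + 1) (h + 1) | m + 1 ∉ D} = dyckPrefixes m h := by
  ext D
  simp only [mem_filter, mem_dyckPrefixes]
  constructor
  · rintro ⟨⟨hsub, hcard, hpre⟩, hm⟩
    exact ⟨subset_Icc_of_succ_notMem hsub hm, by omega, fun k hk => hpre k (by omega)⟩
  · rintro ⟨hsub, hcard, hpre⟩
    refine ⟨⟨hsub.trans (Icc_subset_Icc_right (by omega)), by omega, fun k hk => ?_⟩,
      succ_notMem_of_subset_Icc hsub⟩
    rcases Nat.lt_or_ge m k with hmk | hkm
    · rw [filter_le_eq_self_of_subset_Icc hsub hmk.le]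
      omega
    · exact hpre k hkm

lemma filter_notMem_dyckPrefixes_succ_zero (m : ℕ) :
    {D ∈ dyckPrefixes (m + 1) 0 | m + 1 ∉ D} = ∅ := by
  refine eq_empty_of_forall_notMem fun D hD => ?_
  obtain ⟨⟨hsub, hcard, hpre⟩, hm⟩ := mem_filter.1 hD |>.imp_left mem_dyckPrefixes.1
  have := hpre m (by omega)
  rw [filter_le_eq_self_of_subset_Icc (subset_Icc_of_succ_notMem hsub hm) le_rfl] at this
  omega

lemma filter_mem_dyckPrefixes_succ (m h : ℕ) :
    {D ∈ dyckPrefixes (m + 1) h | m + 1 ∈ D} =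
      (dyckPrefixes m (h + 1)).image (insert (m + 1)) := by
  ext D
  simp only [mem_filter, mem_image, mem_dyckPrefixes]
  constructor
  · rintro ⟨⟨hsub, hcard, hpre⟩, hm⟩
    refine ⟨D.erase (m + 1), ⟨subset_Icc_of_succ_notMem ((erase_subset _ _).trans hsub)
      (notMem_erase _ _), ?_, fun k hk => ?_⟩, insert_erase hm⟩
    · have := card_pos.2 ⟨_, hm⟩
      rw [card_erase_of_mem hm]
      omega
    · have := card_le_card (filter_subset_filter (· ≤ k) (erase_subset (m + 1) D))
      have := hpre k (by omega)
      omega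
  · rintro ⟨D, ⟨hsub, hcard, hpre⟩, rfl⟩
    have hm := succ_notMem_of_subset_Icc hsub
    refine ⟨⟨insert_subset (by simp) (hsub.trans (Icc_subset_Icc_right (by omega))), ?_,
      fun k hk => ?_⟩, mem_insert_self _ _⟩
    · rw [card_insert_of_notMem hm]
      omega
    · rcases Nat.lt_or_ge m k with hmk | hkm
      · have := card_filter_le (insert (m + 1) D) (· ≤ k)
        rw [card_insert_of_notMem hm] at this
        omega
      · rw [filter_insert, if_neg (by omega)]
        exact hpre k hkm

lemma heightWeight_insert {D : Finset ℕ} {a : ℕ} (ha : ∀ x ∈ D, x < a) :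
    heightWeight (insert a D) = (a - 1 - 2 * #D) * heightWeight D := by
  have haD : a ∉ D := fun h => lt_irrefl a (ha a h)
  rw [heightWeight, prod_insert haD, heightWeight]
  congr 1
  · rw [downHeight, filter_true_of_mem fun x hx => ?_, card_insert_of_notMem haD]
    · omega
    · rcases mem_insert.1 hx with rfl | hx
      exacts [le_rfl, (ha x hx).le]
  · refine prod_congr rfl fun d hd => ?_
    rw [downHeight, downHeight, filter_insert, if_neg (ha d hd).not_ge]

lemma weightedCount_succ (m h : ℕ) :
    weightedCount (m + 1) h =
      ∑ D ∈ dyckPrefixes (m + 1) h with m + 1 ∉ D, heightWeight D +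
        (h + 1) * weightedCount m (h + 1) := by
  rw [weightedCount, ← sum_filter_not_add_sum_filter _ (m + 1 ∈ ·),
    filter_mem_dyckPrefixes_succ, sum_image, weightedCount, mul_sum]
  · refine congrArg _ (sum_congr rfl fun D hD => ?_)
    obtain ⟨hsub, hcard, -⟩ := mem_dyckPrefixes.1 hD
    rw [heightWeight_insert fun x hx => Nat.lt_succ_of_le (mem_Icc.1 (hsub hx)).2]
    congr 1
    omega
  · intro D hD D' hD' hDD'
    have hm {E} (hE : E ∈ dyckPrefixes m (h + 1)) : m + 1 ∉ E :=
      succ_notMem_of_subset_Icc (mem_dyckPrefixes.1 hE).1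
    rw [← erase_insert (hm hD), ← erase_insert (hm hD')]
    exact congrArg (·.erase (m + 1)) hDD'

lemma weightedCount_succ_zero (m : ℕ) : weightedCount (m + 1) 0 = weightedCount m 1 := by
  rw [weightedCount_succ, filter_notMem_dyckPrefixes_succ_zero, sum_empty, zero_add, zero_add,
    one_mul]

lemma weightedCount_succ_succ (m h : ℕ) :
    weightedCount (m + 1) (h + 1) = weightedCount m h + (h + 2) * weightedCount m (h + 2) := by
  rw [weightedCount_succ, filter_notMem_dyckPrefixes_succ_succ]
  rfl

lemma weightedCount_of_lt {m h : ℕ} (hmh : m < h) : weightedCount m h = 0 := by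
  rw [weightedCount, dyckPrefixes_eq_empty_of_lt hmh, sum_empty]

lemma weightedCount_zero_zero : weightedCount 0 0 = 1 := by
  rw [weightedCount, dyckPrefixes_zero_zero, sum_singleton, heightWeight, prod_empty]

lemma weightedCount_self (h : ℕ) : weightedCount h h = 1 := by
  induction h with
  | zero => exact weightedCount_zero_zero
  | succ h ih =>
    rw [weightedCount_succ_succ, ih, weightedCount_of_lt (by omega), mul_zero, add_zero]

theorem weightedCount_add_two_mul (h t : ℕ) :
    weightedCount (h + 2 * t) h = (h + 2 * t).choose h * ∏ i ∈ range t, (2 * i + 1) := by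
  induction t generalizing h with
  | zero => simp [weightedCount_self]
  | succ t iht =>
    induction h with
    | zero =>
      rw [show 0 + 2 * (t + 1) = (1 + 2 * t) + 1 by ring, weightedCount_succ_zero, iht,
        prod_range_succ, Nat.choose_zero_right, Nat.choose_one_right]
      ring
    | succ h ihh =>
      have hchoose : (h + 2 + 2 * t).choose (h + 2) * (h + 2) =
          (h + 2 + 2 * t).choose (h + 1) * (2 * t + 1) := by
        have := Nat.choose_succ_right_eq (h + 2 + 2 * t) (h + 1)
        rwa [show h + 2 + 2 * t - (h + 1) = 2 * t + 1 by omega] at this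
      rw [show h + 1 + 2 * (t + 1) = h + 2 * (t + 1) + 1 by ring, weightedCount_succ_succ, ihh,
        show h + 2 * (t + 1) = h + 2 + 2 * t by ring, iht, Nat.choose_succ_succ', prod_range_succ]
      linear_combination (∏ i ∈ range t, (2 * i + 1)) * hchoose

lemma Finset.card_filter_le_orderEmbOfFin {α : Type*} [LinearOrder α] (s : Finset α) {k : ℕ}
    (h : #s = k) (i : Fin k) :
    #{x ∈ s | x ≤ s.orderEmbOfFin h i} = i + 1 := by
  have : {x ∈ s | x ≤ s.orderEmbOfFin h i} = (Iic i).map (s.orderEmbOfFin h).toEmbedding := by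
    ext x
    simp only [mem_filter, mem_map, mem_Iic, RelEmbedding.coe_toEmbedding]
    constructor
    · rintro ⟨hx, hxi⟩
      obtain ⟨j, rfl⟩ : x ∈ Set.range (s.orderEmbOfFin h) := by simpa using hx
      exact ⟨j, (s.orderEmbOfFin h).le_iff_le.1 hxi, rfl⟩
    · rintro ⟨j, hj, rfl⟩
      exact ⟨orderEmbOfFin_mem s h j, (s.orderEmbOfFin h).le_iff_le.2 hj⟩
  rw [this, card_map, Fin.card_Iic]

lemma dstep_succ_eq_orderEmbOfFin {D : Finset ℕ} {n : ℕ} (hD : #D = n) (i : Fin n) :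
    dstep D (i + 1) = D.orderEmbOfFin hD i := by
  rw [dstep, Nat.add_sub_cancel, orderEmbOfFin_apply, List.getD_eq_getElem _ _ (by simp [hD])]
  rfl

lemma prod_ht_eq_heightWeight {D : Finset ℕ} {n : ℕ} (hD : #D = n) :
    ∏ i : Fin n, ht D (i + 1) = heightWeight D := by
  have := prod_map univ (D.orderEmbOfFin hD).toEmbedding (downHeight D)
  rw [map_orderEmbOfFin_univ] at this
  rw [heightWeight, this]
  refine prod_congr rfl fun i _ => ?_
  rw [ht, downHeight, dstep_succ_eq_orderEmbOfFin hD, RelEmbedding.coe_toEmbedding,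
    card_filter_le_orderEmbOfFin]

lemma ncard_setOf_bounded_labels {α ι : Type*} [Fintype ι] [DecidableEq ι] (S : Finset α)
    (b : α → ι → ℕ) :
    Set.ncard {p : α × (ι → ℕ) | p.1 ∈ S ∧ ∀ i, 1 ≤ p.2 i ∧ p.2 i ≤ b p.1 i} =
      ∑ a ∈ S, ∏ i, b a i := by
  have : {p : α × (ι → ℕ) | p.1 ∈ S ∧ ∀ i, 1 ≤ p.2 i ∧ p.2 i ≤ b p.1 i} =
      Equiv.sigmaEquivProd α (ι → ℕ) ''
        ↑(S.sigma fun a => Fintype.piFinset fun i => Icc 1 (b a i)) := by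
    ext p
    simp only [Equiv.image_eq_preimage_symm, Set.mem_preimage, Set.mem_ofPred_eq, mem_coe,
      mem_sigma, Fintype.mem_piFinset, mem_Icc]
    rfl
  rw [this, Set.ncard_image_of_injective _ (Equiv.injective _), Set.ncard_coe_finset, card_sigma]
  simp

/-- the number of Hermite histories of length `2n` (a Dyck path of length `2n`
together with a label between `1` and `h_i` on the `i`-th down step) is `1·3·5⋯(2n-1)`. -/
theorem stmt12 (n : ℕ) :
    Set.ncard {p : Finset ℕ × (Fin n → ℕ) |
        IsDyck (2 * n) p.1 ∧ ∀ i : Fin n, 1 ≤ p.2 i ∧ p.2 i ≤ ht p.1 ((i : ℕ) + 1)} =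
      ∏ i ∈ Finset.range n, (2 * i + 1) := by
  simp_rw [← mem_dyckPrefixes_zero]
  refine (ncard_setOf_bounded_labels _ fun D (i : Fin n) => ht D (i + 1)).trans ?_
  have hcard {D : Finset ℕ} (hD : D ∈ dyckPrefixes (2 * n) 0) : #D = n := by
    have := (mem_dyckPrefixes.1 hD).2.1
    omega
  rw [sum_congr rfl fun D hD => prod_ht_eq_heightWeight (hcard hD), ← weightedCount,
    ← zero_add (2 * n), weightedCount_add_two_mul, Nat.choose_zero_right, one_mul]
end

section
/- There is a bijection between Hermite histories of length 2n and perfect matchings of {1,...,2n}, under which the down steps of the Dyck path correspond exactly to the larger elements of the matched pairs. -/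
open Finset

namespace Stmt13Aux
open Finset

variable {n : ℕ} {D : Finset ℕ}

lemma card_of_isDyck (hD : IsDyck (2*n) D) : D.card = n := by
  have := hD.2.1; omega

/-- the increasing enumeration of down steps -/
noncomputable def dI (hD : IsDyck (2*n) D) : Fin n ↪o ℕ :=
  D.orderEmbOfFin (card_of_isDyck hD)

lemma dI_mem (hD : IsDyck (2*n) D) (i : Fin n) : dI hD i ∈ D :=
  Finset.orderEmbOfFin_mem _ _ _

lemma dI_mem_Icc (hD : IsDyck (2*n) D) (i : Fin n) : dI hD i ∈ Finset.Icc 1 (2*n) :=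
  hD.1 (dI_mem hD i)

lemma dstep_eq_dI (hD : IsDyck (2*n) D) (i : Fin n) :
    dstep D ((i : ℕ) + 1) = dI hD i := by
  have hlen : (i : ℕ) < (D.sort (· ≤ ·)).length := by
    rw [Finset.length_sort, card_of_isDyck hD]; exact i.2
  unfold dstep
  rw [Nat.add_sub_cancel, List.getD_eq_getElem _ _ hlen]
  rfl

lemma image_dI (hD : IsDyck (2*n) D) : Finset.univ.image (fun i => dI hD i) = D := by
  apply Finset.eq_of_subset_of_card_le
  · intro x hx
    rcases Finset.mem_image.1 hx with ⟨i, _, rfl⟩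
    exact dI_mem hD i
  · rw [card_of_isDyck hD, Finset.card_image_of_injective _ (dI hD).injective,
      Finset.card_univ, Fintype.card_fin]

lemma exists_dI (hD : IsDyck (2*n) D) {x : ℕ} (hx : x ∈ D) : ∃ i : Fin n, dI hD i = x := by
  rw [← image_dI hD] at hx
  rcases Finset.mem_image.1 hx with ⟨i, _, h⟩
  exact ⟨i, h⟩

lemma filter_lt_dI (hD : IsDyck (2*n) D) (i : Fin n) :
    (D.filter (· < dI hD i)).card = (i : ℕ) := by
  have : D.filter (· < dI hD i) = (Finset.Iio i).image (fun j => dI hD j) := by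
    ext x
    simp only [Finset.mem_filter, Finset.mem_image, Finset.mem_Iio]
    constructor
    · rintro ⟨hxD, hxlt⟩
      obtain ⟨j, rfl⟩ := exists_dI hD hxD
      exact ⟨j, (dI hD).lt_iff_lt.1 hxlt, rfl⟩
    · rintro ⟨j, hj, rfl⟩
      exact ⟨dI_mem hD j, (dI hD).lt_iff_lt.2 hj⟩
  rw [this, Finset.card_image_of_injective _ (dI hD).injective, Fin.card_Iio]

lemma two_mul_le_dI (hD : IsDyck (2*n) D) (i : Fin n) : 2 * ((i : ℕ) + 1) ≤ dI hD i := by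
  have hle : dI hD i ≤ 2 * n := (Finset.mem_Icc.1 (dI_mem_Icc hD i)).2
  have hpre := hD.2.2 (dI hD i) hle
  have hsub : insert (dI hD i) (D.filter (· < dI hD i)) ⊆ D.filter (· ≤ dI hD i) := by
    intro x hx
    rcases Finset.mem_insert.1 hx with rfl | hx
    · exact Finset.mem_filter.2 ⟨dI_mem hD i, le_refl _⟩
    · rcases Finset.mem_filter.1 hx with ⟨h1, h2⟩
      exact Finset.mem_filter.2 ⟨h1, le_of_lt h2⟩
  have hcard : (i : ℕ) + 1 ≤ (D.filter (· ≤ dI hD i)).card := by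
    have := Finset.card_le_card hsub
    rw [Finset.card_insert_of_notMem (by
      intro h; exact absurd (Finset.mem_filter.1 h).2 (lt_irrefl _)),
      filter_lt_dI hD i] at this
    exact this
  omega

lemma ht_eq (hD : IsDyck (2*n) D) (i : Fin n) :
    ht D ((i : ℕ) + 1) = dI hD i + 1 - 2 * ((i : ℕ) + 1) := by
  unfold ht; rw [dstep_eq_dI hD i]

lemma one_le_ht (hD : IsDyck (2*n) D) (i : Fin n) : 1 ≤ ht D ((i : ℕ) + 1) := by
  rw [ht_eq hD i]
  have := two_mul_le_dI hD i
  omega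

/-- the up-step set -/
def U (n : ℕ) (D : Finset ℕ) : Finset ℕ := Finset.Icc 1 (2*n) \ D

lemma card_U (hD : IsDyck (2*n) D) : (U n D).card = n := by
  rw [U, Finset.card_sdiff_of_subset hD.1, Nat.card_Icc, card_of_isDyck hD]
  omega

/-- allowed choices for the partner of the `i`-th down step -/
noncomputable def A (hD : IsDyck (2*n) D) (i : Fin n) : Finset ℕ := (U n D).filter (· < dI hD i)

lemma A_mono (hD : IsDyck (2*n) D) {i j : Fin n} (hij : i ≤ j) : A hD i ⊆ A hD j := by
  intro x hx
  rcases Finset.mem_filter.1 hx with ⟨h1, h2⟩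
  exact Finset.mem_filter.2 ⟨h1, lt_of_lt_of_le h2 ((dI hD).le_iff_le.2 hij)⟩

lemma card_A (hD : IsDyck (2*n) D) (i : Fin n) :
    (A hD i).card = ht D ((i : ℕ) + 1) + (i : ℕ) := by
  have hIcc : (Finset.Icc 1 (2*n)).filter (· < dI hD i) = Finset.Icc 1 (dI hD i - 1) := by
    ext x
    simp only [Finset.mem_filter, Finset.mem_Icc]
    have h2 : dI hD i ≤ 2 * n := (Finset.mem_Icc.1 (dI_mem_Icc hD i)).2
    omega
  have h1 : 1 ≤ dI hD i := (Finset.mem_Icc.1 (dI_mem_Icc hD i)).1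
  have hsub : D.filter (· < dI hD i) ⊆ (Finset.Icc 1 (2*n)).filter (· < dI hD i) :=
    Finset.filter_subset_filter _ hD.1
  have hA : A hD i = (Finset.Icc 1 (2*n)).filter (· < dI hD i) \ D.filter (· < dI hD i) := by
    ext x
    simp only [A, U, Finset.mem_filter, Finset.mem_sdiff]
    tauto
  rw [hA, Finset.card_sdiff_of_subset hsub, hIcc, filter_lt_dI hD i, Nat.card_Icc, ht_eq hD i]
  have := two_mul_le_dI hD i
  omega

end Stmt13Aux
namespace Stmt13Aux
open Finset

/-- the set of injective systems of representatives -/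
def injFinset {m : ℕ} (A : Fin m → Finset ℕ) : Finset (Fin m → ℕ) :=
  (Fintype.piFinset A).filter (fun f => Function.Injective f)

lemma mem_injFinset {m : ℕ} {A : Fin m → Finset ℕ} {f : Fin m → ℕ} :
    f ∈ injFinset A ↔ (∀ i, f i ∈ A i) ∧ Function.Injective f := by
  simp [injFinset, Fintype.mem_piFinset]

lemma card_injFinset : ∀ {m : ℕ} (A : Fin m → Finset ℕ),
    (∀ i j : Fin m, i ≤ j → A i ⊆ A j) →
    (injFinset A).card = ∏ i : Fin m, ((A i).card - (i : ℕ)) := by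
  intro m
  induction m with
  | zero =>
    intro A _
    rw [injFinset, Finset.filter_true_of_mem fun f _ => Function.injective_of_subsingleton f,
      Fintype.card_piFinset]
    simp
  | succ m ih =>
    intro A hmono
    have hmono' : ∀ i j : Fin m, i ≤ j → A i.castSucc ⊆ A j.castSucc := by
      intro i j hij
      exact hmono _ _ (by simpa using hij)
    have hmaps : ∀ f ∈ injFinset A, (f ∘ Fin.castSucc) ∈ injFinset (fun i => A i.castSucc) := by
      intro f hf
      rcases mem_injFinset.1 hf with ⟨h1, h2⟩
      exact mem_injFinset.2 ⟨fun i => h1 _, h2.comp (Fin.castSucc_injective m)⟩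
    rw [Finset.card_eq_sum_card_fiberwise hmaps]
    have hfiber : ∀ g ∈ injFinset (fun i => A i.castSucc),
        ((injFinset A).filter (fun f => f ∘ Fin.castSucc = g)).card
          = (A (Fin.last m)).card - m := by
      intro g hg
      rcases mem_injFinset.1 hg with ⟨hg1, hg2⟩
      have himg : Finset.univ.image g ⊆ A (Fin.last m) := by
        intro x hx
        rcases Finset.mem_image.1 hx with ⟨j, _, rfl⟩
        exact hmono j.castSucc (Fin.last m) (Fin.le_last _) (hg1 j)
      have hcard : (Finset.univ.image g).card = m := by
        rw [Finset.card_image_of_injective _ hg2, Finset.card_univ, Fintype.card_fin]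
      have key : ((injFinset A).filter (fun f => f ∘ Fin.castSucc = g)).card
          = (A (Fin.last m) \ Finset.univ.image g).card := by
        apply Finset.card_bij (fun f _ => f (Fin.last m))
        · intro f hf
          rcases Finset.mem_filter.1 hf with ⟨hf1, hf2⟩
          rcases mem_injFinset.1 hf1 with ⟨h1, h2⟩
          refine Finset.mem_sdiff.2 ⟨h1 _, ?_⟩
          intro hmem
          rcases Finset.mem_image.1 hmem with ⟨j, _, hj⟩
          have hfj : f j.castSucc = g j := congrFun hf2 j
          have : f j.castSucc = f (Fin.last m) := by rw [hfj, hj]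
          exact absurd (h2 this) (Fin.castSucc_lt_last j).ne
        · intro f1 hf1 f2 hf2 heq
          rcases Finset.mem_filter.1 hf1 with ⟨_, hc1⟩
          rcases Finset.mem_filter.1 hf2 with ⟨_, hc2⟩
          funext i
          refine Fin.lastCases heq (fun j => ?_) i
          rw [show f1 j.castSucc = g j from congrFun hc1 j,
            show f2 j.castSucc = g j from congrFun hc2 j]
        · intro y hy
          rcases Finset.mem_sdiff.1 hy with ⟨hy1, hy2⟩
          refine ⟨Fin.snoc g y, ?_, by simp⟩
          refine Finset.mem_filter.2 ⟨mem_injFinset.2 ⟨?_, ?_⟩, ?_⟩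
          · intro i
            refine Fin.lastCases ?_ ?_ i
            · simpa using hy1
            · intro j; simpa using hg1 j
          · intro i1 i2 h12
            rcases Fin.eq_castSucc_or_eq_last i1 with ⟨j1, rfl⟩ | rfl <;>
              rcases Fin.eq_castSucc_or_eq_last i2 with ⟨j2, rfl⟩ | rfl
            · simp only [Fin.snoc_castSucc] at h12
              rw [hg2 h12]
            · exfalso
              simp only [Fin.snoc_castSucc, Fin.snoc_last] at h12
              exact hy2 (Finset.mem_image.2 ⟨j1, Finset.mem_univ _, h12⟩)
            · exfalso
              simp only [Fin.snoc_castSucc, Fin.snoc_last] at h12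
              exact hy2 (Finset.mem_image.2 ⟨j2, Finset.mem_univ _, h12.symm⟩)
            · rfl
          · funext j; simp
      rw [key, Finset.card_sdiff_of_subset himg, hcard]
    rw [Finset.sum_congr rfl hfiber, Finset.sum_const, smul_eq_mul,
      ih _ hmono', Fin.prod_univ_castSucc]
    simp [Fin.coe_castSucc, Fin.val_last]

end Stmt13Aux
namespace Stmt13Aux
open Finset

variable {n : ℕ} {M : Finset (Finset ℕ)} {D : Finset ℕ}

lemma pair_struct (hM : IsMatching n M) {e : Finset ℕ} (he : e ∈ M) :
    ∃ a b : ℕ, a < b ∧ e = {a, b} := by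
  rcases Finset.card_eq_two.1 (hM.1 e he) with ⟨a, b, hab, rfl⟩
  rcases lt_or_gt_of_ne hab with h | h
  · exact ⟨a, b, h, rfl⟩
  · exact ⟨b, a, h, Finset.pair_comm a b⟩

lemma sup_pair {a b : ℕ} (hab : a < b) : ({a, b} : Finset ℕ).sup id = b := by
  rw [Finset.sup_insert, Finset.sup_singleton]
  exact max_eq_right hab.le

lemma sup_mem_of_mem (hM : IsMatching n M) {e : Finset ℕ} (he : e ∈ M) : e.sup id ∈ e := by
  rcases pair_struct hM he with ⟨a, b, hab, rfl⟩
  rw [sup_pair hab]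
  exact Finset.mem_insert_of_mem (Finset.mem_singleton_self _)

lemma eq_of_mem_mem (hM : IsMatching n M) {e e' : Finset ℕ} (he : e ∈ M) (he' : e' ∈ M)
    {x : ℕ} (hx : x ∈ e) (hx' : x ∈ e') : e = e' := by
  by_contra hne
  have hd := hM.2.1 (Finset.mem_coe.2 he) (Finset.mem_coe.2 he') hne
  exact Finset.disjoint_left.1 hd hx hx'

lemma mem_Icc_of_mem (hM : IsMatching n M) {e : Finset ℕ} (he : e ∈ M) {x : ℕ} (hx : x ∈ e) :
    x ∈ Finset.Icc 1 (2*n) := by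
  rw [← hM.2.2]
  exact Finset.mem_biUnion.2 ⟨e, he, hx⟩

lemma card_M (hM : IsMatching n M) : M.card = n := by
  have h1 : (M.biUnion id).card = ∑ e ∈ M, e.card := by
    apply Finset.card_biUnion
    intro x hx y hy hxy
    exact hM.2.1 (Finset.mem_coe.2 hx) (Finset.mem_coe.2 hy) hxy
  rw [hM.2.2, Nat.card_Icc] at h1
  rw [Finset.sum_congr rfl (fun e he => hM.1 e he), Finset.sum_const, smul_eq_mul] at h1
  omega

lemma supInjOn (hM : IsMatching n M) :
    Set.InjOn (fun e : Finset ℕ => e.sup id) (M : Set (Finset ℕ)) := by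
  intro e he e' he' hee
  have hee' : e.sup id = e'.sup id := hee
  exact eq_of_mem_mem hM (Finset.mem_coe.1 he) (Finset.mem_coe.1 he')
    (sup_mem_of_mem hM (Finset.mem_coe.1 he))
    (by rw [hee']; exact sup_mem_of_mem hM (Finset.mem_coe.1 he'))

/-- the set of larger elements of a matching is a Dyck path -/
lemma isDyck_maxset (hM : IsMatching n M) :
    IsDyck (2*n) (M.image (fun e => e.sup id)) := by
  refine ⟨?_, ?_, ?_⟩
  · intro x hx
    rcases Finset.mem_image.1 hx with ⟨e, he, rfl⟩
    exact mem_Icc_of_mem hM he (sup_mem_of_mem hM he)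
  · rw [Finset.card_image_of_injOn (supInjOn hM), card_M hM]
  · intro k hk
    classical
    have himg : (M.image (fun e => e.sup id)).filter (· ≤ k)
        = (M.filter (fun e => e.sup id ≤ k)).image (fun e => e.sup id) :=
      Finset.filter_image
    rw [himg, Finset.card_image_of_injOn ((supInjOn hM).mono (Finset.filter_subset _ _))]
    set M' := M.filter (fun e => e.sup id ≤ k) with hM'
    have hsub : M'.biUnion id ⊆ Finset.Icc 1 k := by
      intro x hx
      rcases Finset.mem_biUnion.1 hx with ⟨e, he, hxe⟩
      rcases Finset.mem_filter.1 he with ⟨heM, hek⟩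
      have h1 : 1 ≤ x := (Finset.mem_Icc.1 (mem_Icc_of_mem hM heM hxe)).1
      have h2 : x ≤ e.sup id := Finset.le_sup (f := id) hxe
      exact Finset.mem_Icc.2 ⟨h1, le_trans h2 hek⟩
    have hb : (M'.biUnion id).card = 2 * M'.card := by
      rw [Finset.card_biUnion (fun x hx y hy hxy =>
        hM.2.1 (Finset.mem_coe.2 (Finset.filter_subset _ _ hx))
          (Finset.mem_coe.2 (Finset.filter_subset _ _ hy)) hxy)]
      have h2 : ∀ e ∈ M.filter (fun e => e.sup id ≤ k), (id e).card = 2 :=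
        fun e he => hM.1 e (Finset.filter_subset _ _ he)
      rw [Finset.sum_congr rfl h2, Finset.sum_const, smul_eq_mul, mul_comm]
    have := Finset.card_le_card hsub
    rw [hb, Nat.card_Icc] at this
    omega

open scoped Classical in
/-- the set of matchings with prescribed larger-element set -/
noncomputable def matchFinset (n : ℕ) (D : Finset ℕ) : Finset (Finset (Finset ℕ)) :=
  ((Finset.Icc 1 (2*n)).powerset.powerset).filter
    (fun M => IsMatching n M ∧ M.image (fun e => e.sup id) = D)

open scoped Classical in
lemma mem_matchFinset {M : Finset (Finset ℕ)} :
    M ∈ matchFinset n D ↔ IsMatching n M ∧ M.image (fun e => e.sup id) = D := by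
  rw [matchFinset, Finset.mem_filter]
  constructor
  · exact fun h => h.2
  · intro h
    refine ⟨Finset.mem_powerset.2 ?_, h⟩
    intro e he
    refine Finset.mem_powerset.2 ?_
    intro x hx
    exact mem_Icc_of_mem h.1 he hx

lemma mem_U_iff {x : ℕ} : x ∈ U n D ↔ x ∈ Finset.Icc 1 (2*n) ∧ x ∉ D := Finset.mem_sdiff

/-- The key counting bijection. -/
lemma card_matchFinset (hD : IsDyck (2*n) D) :
    (matchFinset n D).card = ∏ i : Fin n, ht D ((i : ℕ) + 1) := by
  classical
  have hbij : (injFinset (A hD)).card = (matchFinset n D).card := by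
    apply Finset.card_bij (fun f _ => Finset.univ.image (fun j => ({f j, dI hD j} : Finset ℕ)))
    · -- maps into matchFinset
      intro f hf
      rcases mem_injFinset.1 hf with ⟨hf1, hf2⟩
      have hflt : ∀ j, f j < dI hD j := fun j => (Finset.mem_filter.1 (hf1 j)).2
      have hfU : ∀ j, f j ∈ U n D := fun j => (Finset.mem_filter.1 (hf1 j)).1
      have hfD : ∀ j, f j ∉ D := fun j => (mem_U_iff.1 (hfU j)).2
      have himgf : Finset.univ.image f = U n D := by
        apply Finset.eq_of_subset_of_card_le
        · intro x hx; rcases Finset.mem_image.1 hx with ⟨j, _, rfl⟩; exact hfU j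
        · rw [card_U hD, Finset.card_image_of_injective _ hf2, Finset.card_univ,
            Fintype.card_fin]
      refine mem_matchFinset.2 ⟨⟨?_, ?_, ?_⟩, ?_⟩
      · -- cards 2
        intro e he
        rcases Finset.mem_image.1 he with ⟨j, _, rfl⟩
        rw [Finset.card_insert_of_notMem
          (fun h => (hflt j).ne (Finset.mem_singleton.1 h)), Finset.card_singleton]
      · -- pairwise disjoint
        intro e he e' he' hne
        rcases Finset.mem_image.1 (Finset.mem_coe.1 he) with ⟨j, _, rfl⟩
        rcases Finset.mem_image.1 (Finset.mem_coe.1 he') with ⟨j', _, rfl⟩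
        have hjj : j ≠ j' := by rintro rfl; exact hne rfl
        simp only [Function.onFun, id_eq]
        rw [Finset.disjoint_left]
        intro x hx hx'
        simp only [Finset.mem_insert, Finset.mem_singleton] at hx hx'
        rcases hx with rfl | rfl <;> rcases hx' with h | h
        · exact hjj (hf2 h)
        · exact hfD j (by rw [h]; exact dI_mem hD j')
        · exact hfD j' (by rw [← h]; exact dI_mem hD j)
        · exact hjj ((dI hD).injective h)
      · -- biUnion = Icc
        apply Finset.Subset.antisymm
        · intro x hx
          rcases Finset.mem_biUnion.1 hx with ⟨e, he, hxe⟩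
          rcases Finset.mem_image.1 he with ⟨j, _, rfl⟩
          simp only [id, Finset.mem_insert, Finset.mem_singleton] at hxe
          rcases hxe with rfl | rfl
          · exact (mem_U_iff.1 (hfU j)).1
          · exact dI_mem_Icc hD j
        · intro x hx
          by_cases hxD : x ∈ D
          · rcases exists_dI hD hxD with ⟨j, rfl⟩
            exact Finset.mem_biUnion.2 ⟨{f j, dI hD j},
              Finset.mem_image_of_mem _ (Finset.mem_univ j),
              by simp⟩
          · have : x ∈ U n D := mem_U_iff.2 ⟨hx, hxD⟩
            rw [← himgf] at this
            rcases Finset.mem_image.1 this with ⟨j, _, rfl⟩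
            exact Finset.mem_biUnion.2 ⟨{f j, dI hD j},
              Finset.mem_image_of_mem _ (Finset.mem_univ j),
              by simp⟩
      · -- image sup = D
        rw [Finset.image_image]
        rw [show ((fun e : Finset ℕ => e.sup id) ∘ fun j => ({f j, dI hD j} : Finset ℕ))
            = fun j => dI hD j from funext fun j => sup_pair (hflt j)]
        exact image_dI hD
    · -- injective
      intro f1 hf1 f2 hf2 heq
      rcases mem_injFinset.1 hf1 with ⟨h11, _⟩
      rcases mem_injFinset.1 hf2 with ⟨h21, _⟩
      have hlt1 : ∀ j, f1 j < dI hD j := fun j => (Finset.mem_filter.1 (h11 j)).2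
      have hlt2 : ∀ j, f2 j < dI hD j := fun j => (Finset.mem_filter.1 (h21 j)).2
      funext j
      have hmem : ({f1 j, dI hD j} : Finset ℕ) ∈ Finset.univ.image
          (fun j => ({f2 j, dI hD j} : Finset ℕ)) := by
        rw [← heq]; exact Finset.mem_image_of_mem _ (Finset.mem_univ j)
      rcases Finset.mem_image.1 hmem with ⟨j', _, hj'⟩
      have hsup : dI hD j' = dI hD j := by
        rw [← sup_pair (hlt2 j'), hj', sup_pair (hlt1 j)]
      have hj'j : j' = j := (dI hD).injective hsup
      rw [hj'j] at hj'
      have : f2 j ∈ ({f1 j, dI hD j} : Finset ℕ) := by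
        rw [← hj']; exact Finset.mem_insert_self _ _
      simp only [Finset.mem_insert, Finset.mem_singleton] at this
      rcases this with h | h
      · exact h.symm
      · exact absurd h (hlt2 j).ne
    · -- surjective
      intro M hMf
      rcases mem_matchFinset.1 hMf with ⟨hM, hmax⟩
      have hexists : ∀ j : Fin n, ∃ e, e ∈ M ∧ e.sup id = dI hD j := by
        intro j
        have : dI hD j ∈ M.image (fun e => e.sup id) := hmax ▸ dI_mem hD j
        rcases Finset.mem_image.1 this with ⟨e, he, hse⟩
        exact ⟨e, he, hse⟩
      choose E hE hEsup using hexists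
      have hpair : ∀ j : Fin n, ∃ a, a < dI hD j ∧ E j = {a, dI hD j} := by
        intro j
        rcases pair_struct hM (hE j) with ⟨a, b, hab, hEj⟩
        have : (E j).sup id = b := hEj ▸ sup_pair hab
        rw [hEsup j] at this
        exact ⟨a, this ▸ hab, this ▸ hEj⟩
      choose a ha hEa using hpair
      have haM : ∀ j, a j ∈ E j := fun j => (hEa j) ▸ Finset.mem_insert_self _ _
      have haD : ∀ j, a j ∉ D := by
        intro j hj
        rw [← hmax] at hj
        rcases Finset.mem_image.1 hj with ⟨e', he', hsup'⟩
        have hae' : a j ∈ e' := hsup' ▸ sup_mem_of_mem hM he'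
        have : e' = E j := eq_of_mem_mem hM he' (hE j) hae' (haM j)
        rw [this, hEsup j] at hsup'
        exact absurd hsup' (ha j).ne'
      have hainj : Function.Injective a := by
        intro j j' hjj
        have : E j = E j' := eq_of_mem_mem hM (hE j) (hE j') (haM j) (hjj ▸ haM j')
        have hs : dI hD j = dI hD j' := by rw [← hEsup j, ← hEsup j', this]
        exact (dI hD).injective hs
      refine ⟨a, ?_, ?_⟩
      · refine mem_injFinset.2 ⟨?_, hainj⟩
        intro j
        exact Finset.mem_filter.2 ⟨mem_U_iff.2
          ⟨mem_Icc_of_mem hM (hE j) (haM j), haD j⟩, ha j⟩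
      · apply Finset.Subset.antisymm
        · intro e he
          rcases Finset.mem_image.1 he with ⟨j, _, rfl⟩
          rw [← hEa j]
          exact hE j
        · intro e he
          have hsupD : e.sup id ∈ D := by
            rw [← hmax]; exact Finset.mem_image_of_mem _ he
          rcases exists_dI hD hsupD with ⟨j, hj⟩
          have h1 : dI hD j ∈ e := hj ▸ sup_mem_of_mem hM he
          have h2 : dI hD j ∈ E j := by
            rw [← hEsup j]; exact sup_mem_of_mem hM (hE j)
          have : e = E j := eq_of_mem_mem hM he (hE j) h1 h2
          rw [this, hEa j]
          exact Finset.mem_image_of_mem _ (Finset.mem_univ j)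
  rw [← hbij, card_injFinset (A hD) (fun i j hij => A_mono hD hij)]
  apply Finset.prod_congr rfl
  intro i _
  rw [card_A hD i]
  omega

end Stmt13Aux
namespace Stmt13Aux
open Finset

variable {n : ℕ}

noncomputable def fibEquiv {D : Finset ℕ} (hD : IsDyck (2*n) D) :
    {ℓ : Fin n → ℕ // ∀ i : Fin n, 1 ≤ ℓ i ∧ ℓ i ≤ ht D ((i : ℕ) + 1)} ≃
    {M : Finset (Finset ℕ) // IsMatching n M ∧ M.image (fun e => e.sup id) = D} := by
  classical
  have e1 : {ℓ : Fin n → ℕ // ∀ i : Fin n, 1 ≤ ℓ i ∧ ℓ i ≤ ht D ((i : ℕ) + 1)} ≃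
      ↥(Fintype.piFinset (fun i : Fin n => Finset.Icc 1 (ht D ((i : ℕ) + 1)))) :=
    Equiv.subtypeEquivRight (fun ℓ => by
      simp only [Fintype.mem_piFinset, Finset.mem_Icc])
  have e2 : {M : Finset (Finset ℕ) // IsMatching n M ∧ M.image (fun e => e.sup id) = D} ≃
      ↥(matchFinset n D) :=
    Equiv.subtypeEquivRight (fun M => mem_matchFinset.symm)
  have hcard : Fintype.card
      ↥(Fintype.piFinset (fun i : Fin n => Finset.Icc 1 (ht D ((i : ℕ) + 1))))
      = Fintype.card ↥(matchFinset n D) := by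
    rw [Fintype.card_coe, Fintype.card_coe, Fintype.card_piFinset, card_matchFinset hD]
    apply Finset.prod_congr rfl
    intro i _
    rw [Nat.card_Icc]
    omega
  exact e1.trans ((Fintype.equivOfCardEq hcard).trans e2.symm)

end Stmt13Aux

/-- there is a bijection between Hermite histories of length `2n` and perfect
matchings of `{1,…,2n}` under which the down steps of the Dyck path are exactly the larger
elements of the matched pairs. -/
theorem stmt13 (n : ℕ) :
    ∃ F : {p : Finset ℕ × (Fin n → ℕ) //
            IsDyck (2 * n) p.1 ∧ ∀ i : Fin n, 1 ≤ p.2 i ∧ p.2 i ≤ ht p.1 ((i : ℕ) + 1)} ≃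
          {M : Finset (Finset ℕ) // IsMatching n M},
      ∀ p, (F p).1.image (fun e => e.sup id) = p.1.1 := by
  classical
  let E1 : {p : Finset ℕ × (Fin n → ℕ) //
      IsDyck (2 * n) p.1 ∧ ∀ i : Fin n, 1 ≤ p.2 i ∧ p.2 i ≤ ht p.1 ((i : ℕ) + 1)} ≃
      Σ D : {D : Finset ℕ // IsDyck (2 * n) D},
        {ℓ : Fin n → ℕ // ∀ i : Fin n, 1 ≤ ℓ i ∧ ℓ i ≤ ht D.1 ((i : ℕ) + 1)} :=
    { toFun := fun p => ⟨⟨p.1.1, p.2.1⟩, ⟨p.1.2, p.2.2⟩⟩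
      invFun := fun q => ⟨(q.1.1, q.2.1), q.1.2, q.2.2⟩
      left_inv := fun p => rfl
      right_inv := fun q => rfl }
  let E2 : {M : Finset (Finset ℕ) // IsMatching n M} ≃
      Σ D : {D : Finset ℕ // IsDyck (2 * n) D},
        {M : Finset (Finset ℕ) // IsMatching n M ∧ M.image (fun e => e.sup id) = D.1} :=
    { toFun := fun M => ⟨⟨M.1.image (fun e => e.sup id), Stmt13Aux.isDyck_maxset M.2⟩,
        ⟨M.1, M.2, rfl⟩⟩
      invFun := fun q => ⟨q.2.1, q.2.2.1⟩
      left_inv := fun M => rfl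
      right_inv := fun q => by
        obtain ⟨⟨D, hD⟩, M, hM, hmax⟩ := q
        dsimp only at hmax ⊢
        subst hmax
        rfl }
  refine ⟨E1.trans ((Equiv.sigmaCongrRight (fun D => Stmt13Aux.fibEquiv D.2)).trans E2.symm),
    fun p => ?_⟩
  exact ((Equiv.sigmaCongrRight (fun D => Stmt13Aux.fibEquiv D.2)) (E1 p)).2.2.2
end

section
/- Fix 1 ≤ m ≤ n and 1 ≤ k_1 < k_2 < ··· < k_m ≤ 2n. The number of perfect matchings of {1,...,2n} in which each k_i is matched to a smaller number equals (k_1 - 1)(k_2 - 3)···(k_m - 2m + 1) · (2n - 2m - 1)(2n - 2m - 3)···3·1. -/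
open Finset

namespace S14

def cset (n m : ℕ) (k : Fin m → ℕ) : Set (Finset (Finset ℕ)) :=
  {M | IsMatching n M ∧ ∀ i : Fin m, ∃ e ∈ M, k i ∈ e ∧ e.sup id = k i}

lemma sup_eq_iff {e : Finset ℕ} {x : ℕ} (hx : x ∈ e) :
    e.sup id = x ↔ ∀ y ∈ e, y ≤ x := by
  constructor
  · intro h y hy; exact h ▸ Finset.le_sup (f := id) hy
  · intro h; exact le_antisymm (Finset.sup_le h) (Finset.le_sup (f := id) hx)

def psi (j K x : ℕ) : ℕ := if x + 2 ≤ K then (if x < j then x else x + 1) else x + 2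
def phi (j K x : ℕ) : ℕ := if K < x then x - 2 else if j < x then x - 1 else x

variable {j K : ℕ}

lemma psi_mono (hj : 1 ≤ j) (hjK : j < K) : StrictMono (psi j K) := by
  intro x y h; unfold psi; split_ifs <;> omega

lemma phi_psi (x : ℕ) : phi j K (psi j K x) = x := by
  unfold psi phi; split_ifs <;> omega

lemma psi_inj : Function.Injective (psi j K) :=
  Function.LeftInverse.injective (phi_psi)

lemma psi_mem (hj : 1 ≤ j) (hjK : j < K) {n x : ℕ} (h1 : 1 ≤ x) (h2 : x ≤ 2 * n) :
    1 ≤ psi j K x ∧ psi j K x ≤ 2 * n + 2 ∧ psi j K x ≠ j ∧ psi j K x ≠ K := by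
  unfold psi; split_ifs <;> omega

lemma psi_phi (hj : 1 ≤ j) (hjK : j < K) {x : ℕ} (h1 : 1 ≤ x) (hxj : x ≠ j) (hxK : x ≠ K) :
    psi j K (phi j K x) = x := by
  unfold psi phi; split_ifs <;> omega

lemma phi_mem (hj : 1 ≤ j) (hjK : j < K) {n x : ℕ} (hK2 : K ≤ 2 * n + 2)
    (h1 : 1 ≤ x) (h2 : x ≤ 2 * n + 2) (hxj : x ≠ j) (hxK : x ≠ K) :
    1 ≤ phi j K x ∧ phi j K x ≤ 2 * n := by
  unfold phi; split_ifs <;> omega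

lemma psi_big {x : ℕ} (h : K ≤ x + 1) : psi j K x = x + 2 := by
  unfold psi; split_ifs <;> omega

lemma phi_big {x : ℕ} (h : K < x) : phi j K x = x - 2 := by
  unfold phi; split_ifs <;> omega

lemma phi_le (hj : 1 ≤ j) (hjK : j < K) {x y : ℕ} (hxy : x ≤ y)
    (hxj : x ≠ j) (hxK : x ≠ K) (hyj : y ≠ j) (hyK : y ≠ K) :
    phi j K x ≤ phi j K y := by
  unfold phi; split_ifs <;> omega

lemma roundtrip (hj1 : 1 ≤ j) (hjK : j < K) {f : Finset ℕ}
    (hf : ∀ x ∈ f, 1 ≤ x ∧ x ≠ j ∧ x ≠ K) :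
    (f.image (phi j K)).image (psi j K) = f := by
  rw [Finset.image_image]
  have h : f.image (psi j K ∘ phi j K) = f.image id :=
    Finset.image_congr (fun x hx => by
      obtain ⟨h1, h2, h3⟩ := hf x hx; exact psi_phi hj1 hjK h1 h2 h3)
  rwa [Finset.image_id] at h

lemma phi_injOn (hj1 : 1 ≤ j) (hjK : j < K) {f : Finset ℕ}
    (hf : ∀ x ∈ f, 1 ≤ x ∧ x ≠ j ∧ x ≠ K) :
    Set.InjOn (phi j K) f := by
  intro x hx y hy h
  obtain ⟨h1, h2, h3⟩ := hf x hx
  obtain ⟨h1', h2', h3'⟩ := hf y hy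
  have := congrArg (psi j K) h
  rwa [psi_phi hj1 hjK h1 h2 h3, psi_phi hj1 hjK h1' h2' h3'] at this

lemma pair_other {e : Finset ℕ} {x : ℕ} (h2 : e.card = 2) (hx : x ∈ e) :
    ∃ j, j ≠ x ∧ e = {j, x} := by
  obtain ⟨a, b, hab, rfl⟩ := Finset.card_eq_two.mp h2
  rcases Finset.mem_insert.mp hx with rfl | h
  · exact ⟨b, fun h => hab h.symm, by rw [Finset.pair_comm]⟩
  · rw [Finset.mem_singleton] at h; subst h; exact ⟨a, hab, rfl⟩

lemma mem_Icc_of_mem {n : ℕ} {M : Finset (Finset ℕ)} (hM : IsMatching n M)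
    {f : Finset ℕ} (hf : f ∈ M) : f ⊆ Finset.Icc 1 (2 * n) := by
  rw [← hM.2.2]; exact Finset.subset_biUnion_of_mem id hf

section Step

variable {n m : ℕ} {k : Fin (m + 1) → ℕ}

/-- The forward map of the bijection. -/
def F (k0 : ℕ) (p : ℕ × Finset (Finset ℕ)) : Finset (Finset ℕ) :=
  insert {p.1, k0} (p.2.image (Finset.image (psi p.1 k0)))

lemma fwd (hk : StrictMono k) (hk1 : ∀ i, 1 ≤ k i) (hk2 : ∀ i, k i ≤ 2 * (n + 1))
    (hK : 2 ≤ k 0) {j : ℕ} (hj1 : 1 ≤ j) (hj2 : j < k 0) {M' : Finset (Finset ℕ)}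
    (hM' : M' ∈ cset n m (fun i => k i.succ - 2)) :
    F (k 0) (j, M') ∈ cset (n + 1) (m + 1) k := by
  show insert {j, k 0} (M'.image (Finset.image (psi j (k 0)))) ∈ cset (n + 1) (m + 1) k
  obtain ⟨⟨hcard, hdisj, hbiU⟩, hcons⟩ := hM'
  have hK2 : k 0 ≤ 2 * n + 2 := by have := hk2 0; omega
  have hsucc : ∀ i : Fin m, k 0 < k i.succ := fun i => hk (Fin.succ_pos i)
  have hsubf : ∀ f ∈ M', ∀ x ∈ f, 1 ≤ x ∧ x ≤ 2 * n := by
    intro f hf x hx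
    exact Finset.mem_Icc.mp (mem_Icc_of_mem ⟨hcard, hdisj, hbiU⟩ hf hx)
  constructor
  · refine ⟨?_, ?_, ?_⟩
    · intro e he
      rcases Finset.mem_insert.mp he with rfl | he
      · rw [Finset.card_insert_of_notMem (by simp; omega), Finset.card_singleton]
      · obtain ⟨f, hf, rfl⟩ := Finset.mem_image.mp he
        rw [Finset.card_image_of_injective _ psi_inj]; exact hcard f hf
    · intro e1 h1 e2 h2 hne
      simp only [Finset.coe_insert, Set.mem_insert_iff, Finset.mem_coe,
        Finset.mem_image] at h1 h2
      simp only [Function.onFun, id_eq]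
      rw [Finset.disjoint_left]
      rcases h1 with rfl | ⟨f1, hf1, rfl⟩ <;> rcases h2 with rfl | ⟨f2, hf2, rfl⟩
      · exact absurd rfl hne
      · intro a ha hb
        obtain ⟨y, hy, rfl⟩ := Finset.mem_image.mp hb
        have hy' := hsubf f2 hf2 y hy
        have hp := psi_mem hj1 hj2 (n := n) hy'.1 hy'.2
        simp only [Finset.mem_insert, Finset.mem_singleton] at ha
        rcases ha with ha | ha
        · exact hp.2.2.1 ha
        · exact hp.2.2.2 ha
      · intro a ha hb
        obtain ⟨y, hy, rfl⟩ := Finset.mem_image.mp ha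
        have hy' := hsubf f1 hf1 y hy
        have hp := psi_mem hj1 hj2 (n := n) hy'.1 hy'.2
        simp only [Finset.mem_insert, Finset.mem_singleton] at hb
        rcases hb with hb | hb
        · exact hp.2.2.1 hb
        · exact hp.2.2.2 hb
      · have hf12 : f1 ≠ f2 := by rintro rfl; exact hne rfl
        have hd := hdisj (Finset.mem_coe.mpr hf1) (Finset.mem_coe.mpr hf2) hf12
        simp only [Function.onFun, id_eq] at hd
        intro a ha hb
        obtain ⟨y1, hy1, hay1⟩ := Finset.mem_image.mp ha
        obtain ⟨y2, hy2, hay2⟩ := Finset.mem_image.mp hb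
        have : y1 = y2 := psi_inj (hay1.trans hay2.symm)
        subst this
        exact (Finset.disjoint_left.mp hd hy1) hy2
    · rw [Finset.biUnion_insert]
      have h1 : (M'.image (Finset.image (psi j (k 0)))).biUnion id
          = (M'.biUnion id).image (psi j (k 0)) := by
        rw [Finset.biUnion_image, Finset.image_biUnion]
        simp only [id_eq]
      rw [h1, hbiU]
      have h2 : (Finset.Icc 1 (2 * n)).image (psi j (k 0))
          = Finset.Icc 1 (2 * (n + 1)) \ {j, k 0} := by
        ext x
        simp only [Finset.mem_image, Finset.mem_sdiff, Finset.mem_Icc, Finset.mem_insert,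
          Finset.mem_singleton]
        constructor
        · rintro ⟨y, hy, rfl⟩
          have hp := psi_mem hj1 hj2 (n := n) hy.1 hy.2
          exact ⟨⟨hp.1, by omega⟩, by tauto⟩
        · rintro ⟨⟨hx1, hx2⟩, hx3⟩
          push_neg at hx3
          have hp := phi_mem hj1 hj2 (n := n) hK2 hx1 (by omega) hx3.1 hx3.2
          exact ⟨phi j (k 0) x, hp, psi_phi hj1 hj2 hx1 hx3.1 hx3.2⟩
      rw [h2]
      show ({j, k 0} : Finset ℕ) ∪ _ = _
      rw [Finset.union_sdiff_of_subset]
      intro x hx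
      simp only [Finset.mem_insert, Finset.mem_singleton] at hx
      have := hk2 0
      rcases hx with rfl | rfl <;> (rw [Finset.mem_Icc]; omega)
  · intro i
    rcases Fin.eq_zero_or_eq_succ i with rfl | ⟨i', rfl⟩
    · refine ⟨{j, k 0}, Finset.mem_insert_self _ _, by simp, ?_⟩
      rw [sup_eq_iff (by simp)]
      intro y hy
      simp only [Finset.mem_insert, Finset.mem_singleton] at hy
      rcases hy with rfl | rfl <;> omega
    · obtain ⟨f, hf, hkf, hsup⟩ := hcons i'
      have hpsiK : psi j (k 0) (k i'.succ - 2) = k i'.succ := by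
        have h1 := hsucc i'
        rw [psi_big (by omega)]; omega
      refine ⟨f.image (psi j (k 0)),
        Finset.mem_insert_of_mem (Finset.mem_image_of_mem _ hf), ?_, ?_⟩
      · exact hpsiK ▸ Finset.mem_image_of_mem _ hkf
      · rw [sup_eq_iff (hpsiK ▸ Finset.mem_image_of_mem _ hkf)]
        intro y hy
        obtain ⟨x, hx, rfl⟩ := Finset.mem_image.mp hy
        have hxle := (sup_eq_iff hkf).mp hsup x hx
        calc psi j (k 0) x ≤ psi j (k 0) (k i'.succ - 2) :=
              (psi_mono hj1 hj2).monotone hxle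
          _ = k i'.succ := hpsiK

lemma bwd (hk : StrictMono k) (hk1 : ∀ i, 1 ≤ k i) (hk2 : ∀ i, k i ≤ 2 * (n + 1))
    (hK : 2 ≤ k 0) {M : Finset (Finset ℕ)} (hM : M ∈ cset (n + 1) (m + 1) k) :
    ∃ j M', 1 ≤ j ∧ j ≤ k 0 - 1 ∧ M' ∈ cset n m (fun i => k i.succ - 2) ∧
      F (k 0) (j, M') = M := by
  obtain ⟨⟨hcard, hdisj, hbiU⟩, hcons⟩ := hM
  have hK2 : k 0 ≤ 2 * n + 2 := by have := hk2 0; omega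
  have hsucc : ∀ i : Fin m, k 0 < k i.succ := fun i => hk (Fin.succ_pos i)
  obtain ⟨e, heM, hke, hsup⟩ := hcons 0
  obtain ⟨j, hjK, rfl⟩ := pair_other (hcard e heM) hke
  have hje : j ∈ ({j, k 0} : Finset ℕ) := by simp
  have hjIcc := Finset.mem_Icc.mp (mem_Icc_of_mem ⟨hcard, hdisj, hbiU⟩ heM hje)
  have hj1 : 1 ≤ j := hjIcc.1
  have hj2 : j < k 0 := lt_of_le_of_ne ((sup_eq_iff hke).mp hsup j hje) hjK
  -- elements of other edges avoid j and k 0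
  have helems : ∀ f ∈ M.erase {j, k 0}, ∀ x ∈ f,
      1 ≤ x ∧ x ≤ 2 * (n + 1) ∧ x ≠ j ∧ x ≠ k 0 := by
    intro f hf x hx
    obtain ⟨hfne, hfM⟩ := Finset.mem_erase.mp hf
    have hIcc := Finset.mem_Icc.mp (mem_Icc_of_mem ⟨hcard, hdisj, hbiU⟩ hfM hx)
    have hd := hdisj (Finset.mem_coe.mpr hfM) (Finset.mem_coe.mpr heM) hfne
    simp only [Function.onFun, id_eq] at hd
    have hxe : x ∉ ({j, k 0} : Finset ℕ) := Finset.disjoint_left.mp hd hx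
    simp only [Finset.mem_insert, Finset.mem_singleton] at hxe
    push_neg at hxe
    exact ⟨hIcc.1, hIcc.2, hxe.1, hxe.2⟩
  set M' := (M.erase {j, k 0}).image (Finset.image (phi j (k 0))) with hM'def
  have hround : ∀ f ∈ M.erase {j, k 0}, (f.image (phi j (k 0))).image (psi j (k 0)) = f := by
    intro f hf
    exact roundtrip hj1 hj2 (fun x hx => ⟨(helems f hf x hx).1, (helems f hf x hx).2.2.1,
      (helems f hf x hx).2.2.2⟩)
  have hinjOn : ∀ f ∈ M.erase {j, k 0}, Set.InjOn (phi j (k 0)) f := by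
    intro f hf
    exact phi_injOn hj1 hj2 (fun x hx => ⟨(helems f hf x hx).1, (helems f hf x hx).2.2.1,
      (helems f hf x hx).2.2.2⟩)
  -- the biUnion of the erased matching
  have hbiUe : (M.erase {j, k 0}).biUnion id = Finset.Icc 1 (2 * (n + 1)) \ {j, k 0} := by
    ext x
    simp only [Finset.mem_biUnion, id_eq, Finset.mem_sdiff]
    constructor
    · rintro ⟨f, hf, hx⟩
      obtain ⟨h1, h2, h3, h4⟩ := helems f hf x hx
      refine ⟨Finset.mem_Icc.mpr ⟨h1, h2⟩, ?_⟩
      simp only [Finset.mem_insert, Finset.mem_singleton]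
      push_neg
      exact ⟨h3, h4⟩
    · rintro ⟨hx1, hx2⟩
      have : x ∈ M.biUnion id := hbiU ▸ hx1
      obtain ⟨f, hf, hx⟩ := Finset.mem_biUnion.mp this
      refine ⟨f, Finset.mem_erase.mpr ⟨?_, hf⟩, hx⟩
      rintro rfl
      exact hx2 hx
  refine ⟨j, M', hj1, by omega, ⟨⟨?_, ?_, ?_⟩, ?_⟩, ?_⟩
  · -- cards
    intro f hf
    obtain ⟨g, hg, rfl⟩ := Finset.mem_image.mp hf
    rw [Finset.card_image_of_injOn (hinjOn g hg)]
    exact hcard g (Finset.mem_erase.mp hg).2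
  · -- pairwise disjoint
    intro e1 h1 e2 h2 hne
    simp only [Finset.mem_coe, hM'def, Finset.mem_image] at h1 h2
    obtain ⟨f1, hf1, rfl⟩ := h1
    obtain ⟨f2, hf2, rfl⟩ := h2
    have hf12 : f1 ≠ f2 := by
      rintro rfl; exact hne rfl
    have hd := hdisj (Finset.mem_coe.mpr (Finset.mem_erase.mp hf1).2)
      (Finset.mem_coe.mpr (Finset.mem_erase.mp hf2).2) hf12
    simp only [Function.onFun, id_eq] at hd ⊢
    rw [Finset.disjoint_left]
    intro a ha hb
    obtain ⟨y1, hy1, hay1⟩ := Finset.mem_image.mp ha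
    obtain ⟨y2, hy2, hay2⟩ := Finset.mem_image.mp hb
    obtain ⟨u1, u2, u3, u4⟩ := helems f1 hf1 y1 hy1
    obtain ⟨v1, v2, v3, v4⟩ := helems f2 hf2 y2 hy2
    have : y1 = y2 := by
      have := congrArg (psi j (k 0)) (hay1.trans hay2.symm)
      rwa [psi_phi hj1 hj2 u1 u3 u4, psi_phi hj1 hj2 v1 v3 v4] at this
    subst this
    exact (Finset.disjoint_left.mp hd hy1) hy2
  · -- biUnion
    have h1 : M'.biUnion id = ((M.erase {j, k 0}).biUnion id).image (phi j (k 0)) := by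
      rw [hM'def, Finset.biUnion_image, Finset.image_biUnion]
      simp only [id_eq]
    rw [h1, hbiUe]
    ext x
    simp only [Finset.mem_image, Finset.mem_sdiff, Finset.mem_Icc, Finset.mem_insert,
      Finset.mem_singleton]
    constructor
    · rintro ⟨y, ⟨⟨hy1, hy2⟩, hy3⟩, rfl⟩
      push_neg at hy3
      exact phi_mem hj1 hj2 (n := n) hK2 hy1 (by omega) hy3.1 hy3.2
    · intro hx
      have hp := psi_mem hj1 hj2 (n := n) hx.1 hx.2
      exact ⟨psi j (k 0) x, ⟨⟨hp.1, by omega⟩, by push_neg; exact ⟨hp.2.2.1, hp.2.2.2⟩⟩,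
        phi_psi x⟩
  · -- constraints
    intro i
    obtain ⟨f, hfM, hkf, hsupf⟩ := hcons i.succ
    have hfe : f ≠ {j, k 0} := by
      rintro rfl
      have := (sup_eq_iff hkf).mp hsupf (k 0) (by simp)
      have := hsucc i
      omega
    have hf' : f ∈ M.erase {j, k 0} := Finset.mem_erase.mpr ⟨hfe, hfM⟩
    have hphiK : phi j (k 0) (k i.succ) = k i.succ - 2 := phi_big (hsucc i)
    have hmem : k i.succ - 2 ∈ f.image (phi j (k 0)) :=
      hphiK ▸ Finset.mem_image_of_mem _ hkf
    refine ⟨f.image (phi j (k 0)), Finset.mem_image_of_mem _ hf', hmem, ?_⟩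
    show (f.image (phi j (k 0))).sup id = k i.succ - 2
    rw [sup_eq_iff hmem]
    intro y hy
    obtain ⟨x, hx, rfl⟩ := Finset.mem_image.mp hy
    obtain ⟨u1, u2, u3, u4⟩ := helems f hf' x hx
    have hxle := (sup_eq_iff hkf).mp hsupf x hx
    have h5 := hsucc i
    calc phi j (k 0) x ≤ phi j (k 0) (k i.succ) :=
          phi_le hj1 hj2 hxle u3 u4 (by omega) (by omega)
      _ = k i.succ - 2 := hphiK
  · -- F equality
    show insert {j, k 0} (M'.image (Finset.image (psi j (k 0)))) = M
    have h1 : M'.image (Finset.image (psi j (k 0))) = M.erase {j, k 0} := by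
      rw [hM'def, Finset.image_image]
      have : (M.erase {j, k 0}).image
          (Finset.image (psi j (k 0)) ∘ Finset.image (phi j (k 0)))
          = (M.erase {j, k 0}).image id :=
        Finset.image_congr (fun f hf => hround f hf)
      rwa [Finset.image_id] at this
    rw [h1, Finset.insert_erase heM]

lemma K_notMem_image (hj1 : 1 ≤ j) (hjK : j < K) (f : Finset ℕ) :
    K ∉ f.image (psi j K) := by
  intro h
  obtain ⟨y, _, hy⟩ := Finset.mem_image.mp h
  unfold psi at hy; split_ifs at hy <;> omega

lemma inj (hK : 2 ≤ k 0) :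
    Set.InjOn (F (k 0)) ((Set.Icc 1 (k 0 - 1)) ×ˢ cset n m (fun i => k i.succ - 2)) := by
  rintro ⟨j1, M1⟩ hp1 ⟨j2, M2⟩ hp2 heq
  obtain ⟨hj1, _⟩ := hp1
  obtain ⟨hj2, _⟩ := hp2
  simp only [Set.mem_Icc] at hj1 hj2
  have hj1K : j1 < k 0 := by omega
  have hj2K : j2 < k 0 := by omega
  simp only [F] at heq
  have hKni : ∀ (j : ℕ), 1 ≤ j → j < k 0 → ∀ X : Finset (Finset ℕ),
      {j, k 0} ∉ X.image (Finset.image (psi j (k 0))) ∧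
      ({j, k 0} ∉ X.image (Finset.image (psi j2 (k 0))) ∨ True) := by
    intro j hja hjb X
    constructor
    · intro h
      obtain ⟨f, _, hf⟩ := Finset.mem_image.mp h
      have : k 0 ∈ f.image (psi j (k 0)) := by rw [hf]; simp
      exact K_notMem_image hja hjb f this
    · right; trivial
  have hne1 : {j1, k 0} ∉ M1.image (Finset.image (psi j1 (k 0))) :=
    (hKni j1 hj1.1 hj1K M1).1
  have hne2 : {j2, k 0} ∉ M2.image (Finset.image (psi j2 (k 0))) :=
    (hKni j2 hj2.1 hj2K M2).1
  have hjeq : j1 = j2 := by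
    have hmem : ({j1, k 0} : Finset ℕ) ∈ insert {j2, k 0}
        (M2.image (Finset.image (psi j2 (k 0)))) := by
      rw [← heq]; exact Finset.mem_insert_self _ _
    rcases Finset.mem_insert.mp hmem with h | h
    · have : j1 ∈ ({j2, k 0} : Finset ℕ) := h ▸ Finset.mem_insert_self _ _
      simp only [Finset.mem_insert, Finset.mem_singleton] at this
      rcases this with h' | h'
      · exact h'
      · omega
    · exfalso
      obtain ⟨f, _, hf⟩ := Finset.mem_image.mp h
      have : k 0 ∈ f.image (psi j2 (k 0)) := by rw [hf]; simp
      exact K_notMem_image hj2.1 hj2K f this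
  subst hjeq
  have hX : M1.image (Finset.image (psi j1 (k 0))) = M2.image (Finset.image (psi j1 (k 0))) := by
    have e1 : M1.image (Finset.image (psi j1 (k 0)))
        = (insert {j1, k 0} (M1.image (Finset.image (psi j1 (k 0))))).erase {j1, k 0} := by
      rw [Finset.erase_insert hne1]
    have e2 : M2.image (Finset.image (psi j1 (k 0)))
        = (insert {j1, k 0} (M2.image (Finset.image (psi j1 (k 0))))).erase {j1, k 0} := by
      rw [Finset.erase_insert hne2]
    rw [e1, e2, heq]
  have : M1 = M2 :=
    Finset.image_injective (Finset.image_injective psi_inj) hX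
  rw [this]

lemma step (hk : StrictMono k) (hk1 : ∀ i, 1 ≤ k i) (hk2 : ∀ i, k i ≤ 2 * (n + 1))
    (hK : 2 ≤ k 0) :
    (cset (n + 1) (m + 1) k).ncard =
      (k 0 - 1) * (cset n m (fun i => k i.succ - 2)).ncard := by
  have hbij : Set.BijOn (F (k 0)) ((Set.Icc 1 (k 0 - 1)) ×ˢ cset n m (fun i => k i.succ - 2))
      (cset (n + 1) (m + 1) k) := by
    refine ⟨?_, inj hK, ?_⟩
    · rintro ⟨j, M'⟩ ⟨hj, hM'⟩
      simp only [Set.mem_Icc] at hj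
      exact fwd hk hk1 hk2 hK hj.1 (by omega) hM'
    · intro M hM
      obtain ⟨j, M', h1, h2, h3, h4⟩ := bwd hk hk1 hk2 hK hM
      exact ⟨(j, M'), ⟨Set.mem_Icc.mpr ⟨h1, h2⟩, h3⟩, h4⟩
  rw [← hbij.image_eq, Set.ncard_image_of_injOn hbij.injOn]
  have hprod : ((Set.Icc 1 (k 0 - 1)) ×ˢ cset n m (fun i => k i.succ - 2)).ncard
      = (Set.Icc 1 (k 0 - 1)).ncard * (cset n m (fun i => k i.succ - 2)).ncard := by
    simp only [← Nat.card_coe_set_eq]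
    rw [Nat.card_congr (Equiv.Set.prod _ _), Nat.card_prod]
  rw [hprod]
  congr 1
  rw [← Finset.coe_Icc, Set.ncard_coe_finset, Nat.card_Icc]
  omega

lemma cset_empty {n m : ℕ} {k : Fin m → ℕ} (i : Fin m) (h : k i = 1) :
    cset n m k = ∅ := by
  ext M
  simp only [cset, Set.mem_setOf_eq, Set.mem_empty_iff_false, iff_false, not_and]
  rintro hM hc
  obtain ⟨e, heM, hke, hsup⟩ := hc i
  have hcard := hM.1 e heM
  have hsub : e ⊆ Finset.Icc 1 (2 * n) := mem_Icc_of_mem hM heM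
  have hone : ∀ y ∈ e, y = 1 := by
    intro y hy
    have h2 := (sup_eq_iff hke).mp hsup y hy
    have h3 := Finset.mem_Icc.mp (hsub hy)
    omega
  have hsub1 : e ⊆ {1} := fun y hy => Finset.mem_singleton.mpr (hone y hy)
  have := Finset.card_le_card hsub1
  rw [hcard, Finset.card_singleton] at this
  omega

lemma cset_zero (k : Fin 0 → ℕ) : cset 0 0 k = {∅} := by
  ext M
  simp only [cset, Set.mem_setOf_eq, Set.mem_singleton_iff]
  constructor
  · rintro ⟨⟨hcard, _, hbiU⟩, _⟩
    by_contra hne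
    obtain ⟨e, he⟩ := Finset.nonempty_iff_ne_empty.mpr hne
    have h2 := hcard e he
    have h3 : e ⊆ M.biUnion id := Finset.subset_biUnion_of_mem id he
    rw [hbiU] at h3
    have h4 : (Finset.Icc 1 (2 * 0) : Finset ℕ) = ∅ := by decide
    rw [h4, Finset.subset_empty] at h3
    rw [h3] at h2
    simp at h2
  · rintro rfl
    refine ⟨⟨by simp, by simp, by decide⟩, fun i => i.elim0⟩

lemma cset_zero_succ (n : ℕ) (k : Fin 0 → ℕ) :
    cset (n + 1) 0 k = cset (n + 1) 1 (fun _ => 2 * (n + 1)) := by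
  ext M
  simp only [cset, Set.mem_setOf_eq]
  constructor
  · rintro ⟨hM, _⟩
    refine ⟨hM, fun i => ?_⟩
    have h2 : (2 * (n + 1)) ∈ M.biUnion id := by
      rw [hM.2.2, Finset.mem_Icc]; omega
    obtain ⟨e, he, hxe⟩ := Finset.mem_biUnion.mp h2
    simp only [id_eq] at hxe
    refine ⟨e, he, hxe, ?_⟩
    rw [sup_eq_iff hxe]
    intro y hy
    exact (Finset.mem_Icc.mp (mem_Icc_of_mem hM he hy)).2
  · rintro ⟨hM, _⟩
    exact ⟨hM, fun i => i.elim0⟩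

lemma main : ∀ n m (k : Fin m → ℕ), m ≤ n → StrictMono k → (∀ i, 1 ≤ k i) →
    (∀ i, k i ≤ 2 * n) →
    (cset n m k).ncard
      = (∏ i : Fin m, (k i - (2 * (i : ℕ) + 1))) * ∏ j ∈ Finset.range (n - m), (2 * j + 1) := by
  intro n
  induction n with
  | zero =>
    intro m k hmn _ _ _
    have hm0 : m = 0 := Nat.le_zero.mp hmn
    subst hm0
    rw [cset_zero k]
    simp
  | succ n ih =>
    intro m k hmn hk hk1 hk2
    match m, k with
    | 0, k =>
      rw [cset_zero_succ n k]
      have h1 : (cset (n + 1) 1 (fun _ : Fin 1 => 2 * (n + 1))).ncard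
          = (2 * (n + 1) - 1) * (cset n 0 (fun i : Fin 0 => 2 * (n + 1) - 2)).ncard := by
        refine step (m := 0) ?_ ?_ ?_ ?_
        · intro a b h
          exact absurd h (by have := a.isLt; have := b.isLt; omega)
        · intro i; omega
        · intro i; omega
        · omega
      rw [h1, ih 0 _ (by omega) (fun a b h => a.elim0) (fun i => i.elim0) (fun i => i.elim0)]
      simp only [Finset.univ_eq_empty, Finset.prod_empty, one_mul, Nat.sub_zero,
        Finset.prod_range_succ]
      have h2 : 2 * (n + 1) - 1 = 2 * n + 1 := by omega
      rw [h2]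
      ring
    | m + 1, k =>
      by_cases hK : 2 ≤ k 0
      · have hmono : StrictMono (fun i : Fin m => k i.succ - 2) := by
          intro a b h
          have h1 := hk (show a.succ < b.succ from Fin.succ_lt_succ_iff.mpr h)
          have h2 := hk (Fin.succ_pos a)
          simp only
          omega
        have hone : ∀ i : Fin m, 1 ≤ k i.succ - 2 := by
          intro i
          have := hk (Fin.succ_pos i)
          omega
        have hle : ∀ i : Fin m, k i.succ - 2 ≤ 2 * n := by
          intro i
          have := hk2 i.succ
          omega
        rw [step hk hk1 hk2 hK, ih m _ (by omega) hmono hone hle]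
        have hidx : n + 1 - (m + 1) = n - m := by omega
        rw [hidx, Fin.prod_univ_succ]
        simp only [Fin.val_succ, Fin.val_zero]
        have hA : (∏ i : Fin m, (k i.succ - 2 - (2 * (i : ℕ) + 1)))
            = ∏ i : Fin m, (k i.succ - (2 * ((i : ℕ) + 1) + 1)) :=
          Finset.prod_congr rfl (fun i _ => by omega)
        rw [hA]
        have h2 : k 0 - (2 * 0 + 1) = k 0 - 1 := by omega
        rw [h2]
        ring
      · have h1 : k 0 = 1 := by have := hk1 0; omega
        rw [cset_empty 0 h1]
        rw [Set.ncard_empty]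
        have : (∏ i : Fin (m + 1), (k i - (2 * (i : ℕ) + 1))) = 0 := by
          apply Finset.prod_eq_zero (Finset.mem_univ (0 : Fin (m + 1)))
          simp [h1]
        rw [this, zero_mul]

end Step

end S14

/-- for `1 ≤ k_1 < ⋯ < k_m ≤ 2n`, the number of perfect matchings of
`{1,…,2n}` in which every `k_i` is matched to a smaller number is
`(k_1 - 1)(k_2 - 3)⋯(k_m - 2m + 1) · (2n - 2m - 1)(2n - 2m - 3)⋯3·1`
(here `k` is `0`-indexed, so the `i`-th factor is `k i - (2 i + 1)`). -/
theorem stmt14 (n m : ℕ) (hm : 1 ≤ m) (hmn : m ≤ n) (k : Fin m → ℕ)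
    (hk : StrictMono k) (hk1 : ∀ i, 1 ≤ k i) (hk2 : ∀ i, k i ≤ 2 * n) :
    Set.ncard {M : Finset (Finset ℕ) | IsMatching n M ∧
        ∀ i : Fin m, ∃ e ∈ M, k i ∈ e ∧ e.sup id = k i} =
      (∏ i : Fin m, (k i - (2 * (i : ℕ) + 1))) * ∏ j ∈ Finset.range (n - m), (2 * j + 1) :=
  S14.main n m k hmn hk hk1 hk2
end
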